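/- arXiv:0806.2014 — 8 statements merged into one kernel-verified Lean document; each statement's English description precedes it below -/
import Mathlib

section
/- For every positive integer n, every real t > 0, and every integer x, one has (1/n) · ∑_{k=0}^{n−1} exp(−(2 − 2cos(2πk/n))·t) · exp(2πi·k·x/n) = e^{−2t} · ∑_{j∈ℤ} I_{x+jn}(2t), where the series on the right converges absolutely. -/
/-! The numbers `I_m(s)` are the Fourier coefficients of the smooth `2π`-periodic function
`θ ↦ e^{s cos θ}`. Two integrations by parts make them `O(1/m²)`, so they are absolutely summable
and `e^{s cos θ} = ∑ₘ I_m(s) e^{imθ}` holds pointwise. Sampling this series at `θ = -2πk/n` and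
averaging against `e^{2πikx/n}` over `k < n` keeps exactly the coefficients with `m ≡ x mod n`;
the factor `e^{-2t}` comes from `-(2 - 2 cos θ) t = -2t + 2t cos θ`. -/

open MeasureTheory Real Filter

/-- The modified `I`-Bessel function of integer order `x`, via its integral
representation `I_x(t) = (1/π) ∫_0^π e^{t cos θ} cos(xθ) dθ`. -/
noncomputable def besselI (x : ℤ) (t : ℝ) : ℝ :=
  (1 / Real.pi) * ∫ θ in (0:ℝ)..Real.pi, Real.exp (t * Real.cos θ) * Real.cos ((x : ℝ) * θ)

theorem Function.Periodic.deriv {𝕜 F : Type*} [NontriviallyNormedField 𝕜] [NormedAddCommGroup F]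
    [NormedSpace 𝕜 F] {f : 𝕜 → F} {T : 𝕜} (hper : Function.Periodic f T) :
    Function.Periodic (deriv f) T := fun x => by
  rw [← deriv_comp_add_const, hper.funext]

theorem norm_fourierCoeffOn_le {E : Type*} [NormedAddCommGroup E] [NormedSpace ℂ E] {a b : ℝ}
    (hab : a < b) {f : ℝ → E} {C : ℝ} (hC : ∀ x ∈ Set.uIoc a b, ‖f x‖ ≤ C) (n : ℤ) :
    ‖fourierCoeffOn hab f n‖ ≤ C := by
  have hba : 0 < b - a := sub_pos.mpr hab
  rw [fourierCoeffOn_eq_integral, norm_smul, Real.norm_of_nonneg (by positivity)]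
  calc 1 / (b - a) * ‖∫ x in a..b, fourier (-n) (x : AddCircle (b - a)) • f x‖
      ≤ 1 / (b - a) * (C * |b - a|) := by
        gcongr
        refine intervalIntegral.norm_integral_le_of_norm_le_const fun x hx => ?_
        rw [norm_smul, fourier_apply, Circle.norm_coe, one_mul]
        exact hC x hx
    _ = C := by
        rw [abs_of_pos hba]
        field_simp

section FourierCoeffOn

variable {a b : ℝ} (hab : a < b) {f : ℝ → ℂ}

theorem fourierCoeffOn_eq_mul_fourierCoeffOn_deriv (hper : Function.Periodic f (b - a))
    (hf : ContDiff ℝ 1 f) {n : ℤ} (hn : n ≠ 0) :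
    fourierCoeffOn hab f n =
      (b - a) / (2 * π * Complex.I * n) * fourierCoeffOn hab (deriv f) n := by
  have hdiff : Differentiable ℝ f := hf.differentiable one_ne_zero
  rw [fourierCoeffOn_of_hasDerivAt hab hn (fun x _ => (hdiff x).hasDerivAt)
    ((hf.continuous_deriv le_rfl).intervalIntegrable a b)]
  have hfab : f b = f a := by simpa using hper a
  have hn' : (n : ℂ) ≠ 0 := Int.cast_ne_zero.mpr hn
  rw [hfab, sub_self, mul_zero, zero_sub]
  field_simp

theorem summable_fourierCoeffOn_of_contDiff (hper : Function.Periodic f (b - a))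
    (hf : ContDiff ℝ 2 f) : Summable (fourierCoeffOn hab f) := by
  have hf' : ContDiff ℝ 1 (deriv f) := hf.deriv'
  obtain ⟨C, hC⟩ := (isCompact_uIcc (a := a) (b := b)).exists_bound_of_continuousOn
    (hf'.continuous_deriv le_rfl).continuousOn
  refine .of_norm_bounded_eventually ((summable_one_div_int_pow.mpr one_lt_two).mul_left
    ((b - a) ^ 2 / (2 * π) ^ 2 * C)) ?_
  filter_upwards [eventually_cofinite_ne 0] with n hn
  have hcoeff : fourierCoeffOn hab f n =
      ((b - a) / (2 * π * Complex.I * n)) ^ 2 * fourierCoeffOn hab (deriv (deriv f)) n := by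
    rw [fourierCoeffOn_eq_mul_fourierCoeffOn_deriv hab hper (hf.of_le one_le_two) hn,
      fourierCoeffOn_eq_mul_fourierCoeffOn_deriv hab hper.deriv hf' hn, ← mul_assoc, sq]
  have hscale : ‖((b - a : ℂ) / (2 * π * Complex.I * n)) ^ 2‖ =
      (b - a) ^ 2 / (2 * π) ^ 2 * (1 / (n : ℝ) ^ 2) := by
    simp [← Complex.ofReal_sub, abs_of_pos pi_pos, div_pow, mul_pow, sq_abs]
    field_simp
  rw [hcoeff, norm_mul, hscale, mul_right_comm]
  gcongr
  exact norm_fourierCoeffOn_le hab (fun x hx => hC x (Set.uIoc_subset_uIcc hx)) n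

theorem hasSum_fourierCoeffOn_smul_fourier_of_contDiff (hper : Function.Periodic f (b - a))
    (hf : ContDiff ℝ 2 f) (x : ℝ) :
    HasSum (fun n => fourierCoeffOn hab f n • fourier n (x : AddCircle (b - a))) (f x) := by
  have : Fact (0 < b - a) := ⟨sub_pos.mpr hab⟩
  let F : C(AddCircle (b - a), ℂ) := ⟨hper.lift, hf.continuous.quotient_liftOn' _⟩
  have hF : fourierCoeff F = fourierCoeffOn hab f := funext fun n => by
    rw [fourierCoeff_eq_intervalIntegral _ _ a, fourierCoeffOn_eq_integral, add_sub_cancel]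
    rfl
  have hsum := has_pointwise_sum_fourier_series_of_summable
    (hF ▸ summable_fourierCoeffOn_of_contDiff hab hper hf) (x : AddCircle (b - a))
  rwa [hF] at hsum

end FourierCoeffOn

section RootsOfUnity

open Finset

variable {𝕜 : Type*} [Field 𝕜] {ζ : 𝕜} {n : ℕ}

theorem IsPrimitiveRoot.sum_range_zpow_mul (hζ : IsPrimitiveRoot ζ n) (r : ℤ) :
    ∑ k ∈ range n, ζ ^ ((k : ℤ) * r) = if (n : ℤ) ∣ r then (n : 𝕜) else 0 := by
  have hpow (k : ℕ) : ζ ^ ((k : ℤ) * r) = (ζ ^ r) ^ k := by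
    rw [mul_comm, zpow_mul, zpow_natCast]
  simp_rw [hpow]
  split_ifs with h
  · simp [(hζ.zpow_eq_one_iff_dvd r).mpr h]
  · have hr : ζ ^ r ≠ 1 := fun h' => h ((hζ.zpow_eq_one_iff_dvd r).mp h')
    have hrn : (ζ ^ r) ^ n = 1 := by
      rw [← zpow_natCast, ← zpow_mul, mul_comm, zpow_mul, zpow_natCast, hζ.pow_eq_one, one_zpow]
    rw [geom_sum_eq hr, hrn, sub_self, zero_div]

variable [TopologicalSpace 𝕜] [IsTopologicalRing 𝕜] [CharZero 𝕜]

/-- Aliasing: the inverse discrete Fourier transform of the samples `F k = ∑ₘ c m ζ^{-km}`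
is the `n`-periodization of `c`. -/
theorem IsPrimitiveRoot.hasSum_add_mul_of_hasSum (hζ : IsPrimitiveRoot ζ n) (hn : n ≠ 0)
    {c : ℤ → 𝕜} {F : ℕ → 𝕜} (hF : ∀ k : ℕ, HasSum (fun m : ℤ => c m * ζ ^ (-(k * m))) (F k))
    (x : ℤ) :
    HasSum (fun j : ℤ => c (x + j * n)) ((1 / n) * ∑ k ∈ range n, F k * ζ ^ ((k : ℤ) * x)) := by
  have hsum := (hasSum_sum (s := range n) fun k _ =>
    (hF k).mul_right (ζ ^ ((k : ℤ) * x))).mul_left (1 / n : 𝕜)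
  have hfilter (m : ℤ) :
      (1 / n : 𝕜) * ∑ k ∈ range n, c m * ζ ^ (-(k * m)) * ζ ^ ((k : ℤ) * x) =
        if (n : ℤ) ∣ x - m then c m else 0 := by
    simp_rw [mul_assoc, ← zpow_add₀ (hζ.ne_zero hn), ← mul_sum, neg_mul_eq_mul_neg, ← mul_add,
      neg_add_eq_sub, hζ.sum_range_zpow_mul]
    split_ifs
    · field_simp
    · simp
  simp_rw [hfilter] at hsum
  have hinj : Function.Injective fun j : ℤ => x + j * n := fun i j hij => by
    simpa [hn] using hij
  have hsupp : ∀ m ∉ Set.range fun j : ℤ => x + j * n,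
      (if (n : ℤ) ∣ x - m then c m else 0) = 0 :=
    fun m hm => if_neg fun ⟨j, hj⟩ => hm ⟨-j, by linear_combination hj⟩
  exact ((hinj.hasSum_iff hsupp).mpr hsum).congr_fun fun j => by simp

end RootsOfUnity

theorem fourierCoeffOn_exp_mul_cos_eq_besselI (s : ℝ) (m : ℤ) :
    fourierCoeffOn (neg_lt_self pi_pos) (fun θ => ((Real.exp (s * Real.cos θ) : ℝ) : ℂ)) m =
      besselI m s := by
  set g : ℝ → ℂ := fun θ => Real.exp (s * Real.cos θ) * Complex.exp (-(m * θ) * Complex.I)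
  have hg : Continuous g := by fun_prop
  have hfourier (θ : ℝ) :
      fourier (-m) (θ : AddCircle (π - -π)) • ((Real.exp (s * Real.cos θ) : ℝ) : ℂ) = g θ := by
    rw [fourier_coe_apply, smul_eq_mul, mul_comm]
    congr 2
    push_cast
    field_simp
    ring
  have heven (θ : ℝ) :
      g (-θ) + g θ = ((2 * (Real.exp (s * Real.cos θ) * Real.cos (m * θ)) : ℝ) : ℂ) := by
    simp only [g, Real.cos_neg]
    push_cast
    rw [← mul_add, mul_left_comm, Complex.two_cos]
    ring_nf
  have hfold : ∫ θ in -π..π, g θ = ∫ θ in (0:ℝ)..π, (g (-θ) + g θ) := by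
    rw [intervalIntegral.integral_add (f := fun θ => g (-θ))
        ((hg.comp continuous_neg).intervalIntegrable _ _) (hg.intervalIntegrable _ _),
      intervalIntegral.integral_comp_neg, neg_zero,
      intervalIntegral.integral_add_adjacent_intervals (hg.intervalIntegrable _ _)
        (hg.intervalIntegrable _ _)]
  rw [fourierCoeffOn_eq_integral]
  simp_rw [hfourier]
  rw [hfold]
  simp_rw [heven]
  rw [intervalIntegral.integral_ofReal, intervalIntegral.integral_const_mul, besselI,
    Complex.real_smul]
  push_cast
  field_simp
  ring

theorem periodic_ofReal_exp_mul_cos (s : ℝ) :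
    Function.Periodic (fun θ => ((Real.exp (s * Real.cos θ) : ℝ) : ℂ)) (π - -π) := fun θ => by
  simp [sub_neg_eq_add, ← two_mul, Real.cos_add_two_pi]

theorem contDiff_ofReal_exp_mul_cos (s : ℝ) {k : WithTop ℕ∞} :
    ContDiff ℝ k (fun θ => ((Real.exp (s * Real.cos θ) : ℝ) : ℂ)) :=
  Complex.ofRealCLM.contDiff.comp (Real.contDiff_exp.comp (contDiff_const.mul Real.contDiff_cos))

theorem summable_abs_besselI (s : ℝ) : Summable fun m : ℤ => |besselI m s| :=
  (summable_fourierCoeffOn_of_contDiff (neg_lt_self pi_pos) (periodic_ofReal_exp_mul_cos s)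
    (contDiff_ofReal_exp_mul_cos s)).norm.congr fun m => by
    rw [fourierCoeffOn_exp_mul_cos_eq_besselI, Complex.norm_real, Real.norm_eq_abs]

theorem hasSum_besselI_mul_exp (s θ : ℝ) :
    HasSum (fun m : ℤ => (besselI m s : ℂ) * Complex.exp (m * θ * Complex.I))
      (Real.exp (s * Real.cos θ)) := by
  refine (hasSum_fourierCoeffOn_smul_fourier_of_contDiff (neg_lt_self pi_pos)
    (periodic_ofReal_exp_mul_cos s) (contDiff_ofReal_exp_mul_cos s) θ).congr_fun fun m => ?_
  rw [fourierCoeffOn_exp_mul_cos_eq_besselI, fourier_coe_apply, smul_eq_mul]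
  congr 2
  push_cast
  field_simp
  ring

theorem theta_inversion_discrete_circle_general (n : ℕ) (hn : 0 < n) (t : ℝ) (x : ℤ) :
    Summable (fun j : ℤ => |besselI (x + j * n) (2 * t)|) ∧
    (1 / (n : ℂ)) * ∑ k ∈ Finset.range n,
        Complex.exp (((-(2 - 2 * Real.cos (2 * Real.pi * k / n)) * t : ℝ) : ℂ)) *
          Complex.exp (2 * Real.pi * Complex.I * (k : ℂ) * (x : ℂ) / (n : ℂ))
      = ((Real.exp (-(2 * t)) : ℝ) : ℂ) * ∑' j : ℤ, ((besselI (x + j * n) (2 * t) : ℝ) : ℂ) := by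
  have hn0 : n ≠ 0 := hn.ne'
  set ζ : ℂ := Complex.exp (2 * π * Complex.I / n)
  have hζ : IsPrimitiveRoot ζ n := Complex.isPrimitiveRoot_exp n hn0
  have hζpow (r : ℤ) : ζ ^ r = Complex.exp (2 * π * Complex.I * r / n) := by
    rw [← Complex.exp_int_mul]
    ring_nf
  have hsamples (k : ℕ) : HasSum (fun m : ℤ => (besselI m (2 * t) : ℂ) * ζ ^ (-(k * m)))
      (Real.exp (2 * t * Real.cos (2 * π * k / n))) := by
    have h := hasSum_besselI_mul_exp (2 * t) (-(2 * π * k / n))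
    rw [Real.cos_neg] at h
    refine h.congr_fun fun m => ?_
    rw [hζpow]
    push_cast
    ring_nf
  refine ⟨(summable_abs_besselI (2 * t)).comp_injective fun i j hij => by simpa [hn0] using hij,
    ?_⟩
  rw [(hζ.hasSum_add_mul_of_hasSum hn0 hsamples x).tsum_eq,
    mul_left_comm ((Real.exp (-(2 * t)) : ℝ) : ℂ)]
  congr 1
  rw [Finset.mul_sum]
  refine Finset.sum_congr rfl fun k _ => ?_
  rw [hζpow, ← mul_assoc, ← Complex.ofReal_mul, ← Real.exp_add]
  push_cast
  ring_nf

/-- Theta inversion formula for the heat kernel on the discrete circle `nℤ\ℤ`. -/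
theorem theta_inversion_discrete_circle (n : ℕ) (hn : 0 < n) (t : ℝ) (ht : 0 < t) (x : ℤ) :
    Summable (fun j : ℤ => |besselI (x + j * n) (2 * t)|) ∧
    (1 / (n : ℂ)) * ∑ k ∈ Finset.range n,
        Complex.exp (((-(2 - 2 * Real.cos (2 * Real.pi * k / n)) * t : ℝ) : ℂ)) *
          Complex.exp (2 * Real.pi * Complex.I * (k : ℂ) * (x : ℂ) / (n : ℂ))
      = ((Real.exp (-(2 * t)) : ℝ) : ℂ) * ∑' j : ℤ, ((besselI (x + j * n) (2 * t) : ℝ) : ℂ) :=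
  theta_inversion_discrete_circle_general n hn t x
end

section
/- Let d ≥ 1 and let N = (n_1,…,n_d) be a d-tuple of positive integers. For every complex s with Re(s²) > 0, ∑_{Λ_K ≠ 0} 2s/(s² + Λ_K) = V(N) · 2s ∫_0^∞ e^{−s²t} e^{−2dt} I_0(2t)^d dt + 2s ∫_0^∞ e^{−s²t} [θ_N(t) − V(N) e^{−2dt} I_0(2t)^d − 1] dt, where the sum runs over the nonzero eigenvalues Λ_K and both integrals converge absolutely. -/
/-! Since `Λ_K = 0` only for `K = 0`, `θ_N(t) - 1` is the
finite sum of `e^{-Λ_K t}` over the nonzero eigenvalues, and its Laplace transform at `s²` is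
`∑ 1 / (s² + Λ_K)`. The right-hand side is this Laplace transform with the integrand split as
`V(N) e^{-2dt} I_0(2t)^d` plus the remainder; both pieces are integrable against `e^{-s²t}`
because `|I_0(2t)| ≤ e^{2t}` and `0 ≤ θ_N ≤ V(N)` for `t ≥ 0`. -/

open MeasureTheory Real Filter

/-- Eigenvalues of the combinatorial Laplacian on the discrete torus determined by `N`. -/
noncomputable def Lam (d : ℕ) (N : Fin d → ℕ) (K : (j : Fin d) → Fin (N j)) : ℝ :=
  2 * d - ∑ j, 2 * Real.cos (2 * Real.pi * (K j : ℝ) / (N j : ℝ))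

/-- The theta function (heat trace) of the discrete torus determined by `N`. -/
noncomputable def discTheta (d : ℕ) (N : Fin d → ℕ) (t : ℝ) : ℝ :=
  ∑ K : ((j : Fin d) → Fin (N j)), Real.exp (-(Lam d N K) * t)

open Set

@[fun_prop]
lemma continuous_besselI (x : ℤ) : Continuous (besselI x) :=
  continuous_const.mul <|
    intervalIntegral.continuous_parametric_intervalIntegral_of_continuous' (by fun_prop) 0 π

lemma abs_besselI_le (x : ℤ) (t : ℝ) : |besselI x t| ≤ exp |t| := by
  have hbound : ∀ θ, ‖exp (t * cos θ) * cos (x * θ)‖ ≤ exp |t| := fun θ => by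
    have hexp : t * cos θ ≤ |t| := (le_abs_self _).trans <| by
      rw [abs_mul]; exact mul_le_of_le_one_right (abs_nonneg t) (abs_cos_le_one θ)
    rw [norm_mul, norm_of_nonneg (exp_pos _).le, Real.norm_eq_abs]
    exact (mul_le_of_le_one_right (exp_pos _).le (abs_cos_le_one _)).trans (exp_le_exp.2 hexp)
  have hint := intervalIntegral.norm_integral_le_of_norm_le_const (a := 0) (b := π)
    fun θ _ => hbound θ
  rw [sub_zero, abs_of_pos pi_pos, ← Real.norm_eq_abs] at hint
  rw [besselI, abs_mul, abs_of_pos (by positivity : 0 < 1 / π), one_div_mul_eq_div,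
    div_le_iff₀ pi_pos, ← Real.norm_eq_abs]
  exact hint

lemma norm_exp_mul_besselI_pow_le_one (d : ℕ) (x : ℤ) {t : ℝ} (ht : 0 ≤ t) :
    ‖((exp (-(2 * d * t)) : ℝ) : ℂ) * ((besselI x (2 * t) : ℝ) : ℂ) ^ d‖ ≤ 1 := by
  have hI : |besselI x (2 * t)| ^ d ≤ exp (2 * t) ^ d := by
    gcongr
    simpa [abs_of_nonneg ht] using abs_besselI_le x (2 * t)
  calc ‖((exp (-(2 * d * t)) : ℝ) : ℂ) * ((besselI x (2 * t) : ℝ) : ℂ) ^ d‖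
      = exp (-(2 * d * t)) * |besselI x (2 * t)| ^ d := by
        simp only [norm_mul, norm_pow, Complex.norm_real, Real.norm_eq_abs,
          abs_of_pos (exp_pos _)]
    _ ≤ exp (-(2 * d * t)) * exp (2 * t) ^ d := by gcongr
    _ = 1 := by rw [← exp_nat_mul, ← exp_add]; ring_nf; exact exp_zero

lemma cos_two_pi_mul_div_eq_one_iff {k n : ℕ} (hk : k < n) :
    cos (2 * π * k / n) = 1 ↔ k = 0 := by
  have hn : (0 : ℝ) < n := by exact_mod_cast hk.trans_le' (Nat.zero_le k)
  have hlt : 2 * π * k / n < 2 * π := by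
    rw [div_lt_iff₀ hn]; gcongr
  have hgt : -(2 * π) < 2 * π * k / n := by
    have : 0 ≤ 2 * π * k / n := by positivity
    linarith [pi_pos]
  rw [cos_eq_one_iff_of_lt_of_lt hgt hlt]
  simp [pi_ne_zero, hn.ne']

lemma Lam_eq_sum (d : ℕ) (N : Fin d → ℕ) (K : (j : Fin d) → Fin (N j)) :
    Lam d N K = ∑ j, 2 * (1 - cos (2 * π * (K j : ℝ) / (N j : ℝ))) := by
  simp [Lam, Finset.sum_sub_distrib, mul_sub, mul_comm]

lemma Lam_nonneg (d : ℕ) (N : Fin d → ℕ) (K : (j : Fin d) → Fin (N j)) :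
    0 ≤ Lam d N K := by
  rw [Lam_eq_sum]
  exact Finset.sum_nonneg fun j _ => by linarith [cos_le_one (2 * π * (K j : ℝ) / (N j : ℝ))]

lemma Lam_eq_zero_iff (d : ℕ) (N : Fin d → ℕ) (hN : ∀ j, 0 < N j)
    (K : (j : Fin d) → Fin (N j)) : Lam d N K = 0 ↔ K = fun j => ⟨0, hN j⟩ := by
  have hterm : ∀ j, 0 ≤ 2 * (1 - cos (2 * π * (K j : ℝ) / (N j : ℝ))) := fun j => by
    linarith [cos_le_one (2 * π * (K j : ℝ) / (N j : ℝ))]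
  rw [Lam_eq_sum, Fintype.sum_eq_zero_iff_of_nonneg hterm, funext_iff, funext_iff]
  refine forall_congr' fun j => ?_
  rw [Fin.ext_iff, ← cos_two_pi_mul_div_eq_one_iff (K j).isLt, Pi.zero_apply, mul_eq_zero,
    or_iff_right two_ne_zero, sub_eq_zero, eq_comm]

lemma discTheta_sub_one (d : ℕ) (N : Fin d → ℕ) (hN : ∀ j, 0 < N j) (t : ℝ) :
    discTheta d N t - 1 =
      ∑ K ∈ Finset.univ.filter (fun K : (j : Fin d) → Fin (N j) => Lam d N K ≠ 0),
        exp (-Lam d N K * t) := by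
  have hzero : Finset.univ.filter (fun K : (j : Fin d) → Fin (N j) => Lam d N K = 0) =
      {fun j => ⟨0, hN j⟩} := by
    simp only [Lam_eq_zero_iff d N hN, Finset.filter_eq', Finset.mem_univ, if_true]
  rw [discTheta, ← Finset.sum_filter_add_sum_filter_not _ fun K => Lam d N K = 0, hzero,
    Finset.sum_singleton, (Lam_eq_zero_iff d N hN _).2 rfl]
  simp

lemma discTheta_nonneg (d : ℕ) (N : Fin d → ℕ) (t : ℝ) : 0 ≤ discTheta d N t :=
  Finset.sum_nonneg fun _ _ => (exp_pos _).le

lemma discTheta_le_prod (d : ℕ) (N : Fin d → ℕ) {t : ℝ} (ht : 0 ≤ t) :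
    discTheta d N t ≤ ∏ j, (N j : ℝ) := by
  calc discTheta d N t ≤ ∑ _K : (j : Fin d) → Fin (N j), (1 : ℝ) :=
        Finset.sum_le_sum fun K _ => exp_le_one_iff.2 <| by nlinarith [Lam_nonneg d N K]
    _ = ∏ j, (N j : ℝ) := by simp

@[fun_prop]
lemma continuous_discTheta (d : ℕ) (N : Fin d → ℕ) : Continuous (discTheta d N) :=
  continuous_finsetSum _ fun _ _ => by fun_prop

lemma integrableOn_cexp_mul_of_norm_le {a : ℂ} (ha : a.re < 0) {g : ℝ → ℂ}
    (hg : Continuous g) {C : ℝ} (hC : ∀ t, 0 < t → ‖g t‖ ≤ C) :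
    IntegrableOn (fun t : ℝ => Complex.exp (a * t) * g t) (Ioi 0) :=
  (integrableOn_exp_mul_complex_Ioi ha 0).mul_bdd hg.aestronglyMeasurable <|
    (ae_restrict_mem measurableSet_Ioi).mono hC

lemma integrableOn_cexp_mul_exp_mul_besselI_pow {a : ℂ} (ha : a.re < 0) (d : ℕ) (x : ℤ) :
    IntegrableOn (fun t : ℝ => Complex.exp (a * t) * ((exp (-(2 * d * t)) : ℝ) : ℂ) *
      ((besselI x (2 * t) : ℝ) : ℂ) ^ d) (Ioi 0) := by
  simpa only [mul_assoc] using integrableOn_cexp_mul_of_norm_le ha (by fun_prop)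
    fun t ht => norm_exp_mul_besselI_pow_le_one d x ht.le

lemma norm_discTheta_sub_mul_exp_mul_besselI_pow_sub_one_le (d : ℕ) (N : Fin d → ℕ) (x : ℤ)
    {t : ℝ} (ht : 0 ≤ t) :
    ‖((discTheta d N t : ℝ) : ℂ) - ((∏ j, (N j : ℝ) : ℝ) : ℂ) *
      ((exp (-(2 * d * t)) : ℝ) : ℂ) * ((besselI x (2 * t) : ℝ) : ℂ) ^ d - 1‖ ≤
      ∏ j, (N j : ℝ) + ∏ j, (N j : ℝ) + 1 := by
  have hV : 0 ≤ ∏ j, (N j : ℝ) := Finset.prod_nonneg fun j _ => Nat.cast_nonneg _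
  refine (norm_sub_le _ _).trans (add_le_add ((norm_sub_le _ _).trans (add_le_add ?_ ?_))
    norm_one.le)
  · rw [Complex.norm_real, norm_of_nonneg (discTheta_nonneg d N t)]
    exact discTheta_le_prod d N ht
  · rw [mul_assoc, norm_mul, Complex.norm_real, norm_of_nonneg hV]
    exact mul_le_of_le_one_right hV (norm_exp_mul_besselI_pow_le_one d x ht)

lemma integral_cexp_mul_exp {c : ℂ} {l : ℝ} (h : 0 < c.re + l) :
    ∫ t in Ioi (0 : ℝ), Complex.exp (-c * t) * (exp (-l * t) : ℂ) = 1 / (c + l) := by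
  have hre : (-(c + l)).re < 0 := by
    rw [Complex.neg_re, Complex.add_re, Complex.ofReal_re]; linarith
  have hmerge : ∀ t : ℝ, Complex.exp (-c * t) * (exp (-l * t) : ℂ) =
      Complex.exp (-(c + l) * t) := fun t => by
    rw [Complex.ofReal_exp, ← Complex.exp_add]; push_cast; ring_nf
  simp_rw [hmerge, integral_exp_mul_complex_Ioi hre, Complex.ofReal_zero, mul_zero,
    Complex.exp_zero]
  rw [neg_div_neg_eq]

lemma integral_cexp_mul_discTheta_sub_one (d : ℕ) (N : Fin d → ℕ) (hN : ∀ j, 0 < N j)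
    {c : ℂ} (hc : 0 < c.re) :
    ∫ t in Ioi (0 : ℝ), Complex.exp (-c * t) * ((discTheta d N t : ℂ) - 1) =
      ∑ K ∈ Finset.univ.filter (fun K : (j : Fin d) → Fin (N j) => Lam d N K ≠ 0),
        1 / (c + Lam d N K) := by
  have hre : ∀ K, 0 < c.re + Lam d N K := fun K => by linarith [Lam_nonneg d N K]
  have hint : ∀ K, IntegrableOn
      (fun t : ℝ => Complex.exp (-c * t) * (exp (-Lam d N K * t) : ℂ)) (Ioi 0) := fun K =>
    integrableOn_cexp_mul_of_norm_le (by simpa using hc) (by fun_prop) (C := 1) fun t ht => by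
      rw [Complex.norm_real, norm_of_nonneg (exp_pos _).le, exp_le_one_iff]
      nlinarith [Lam_nonneg d N K]
  simp_rw [← Complex.ofReal_one, ← Complex.ofReal_sub, discTheta_sub_one d N hN,
    Complex.ofReal_sum, Finset.mul_sum]
  rw [integral_finsetSum _ fun K _ => hint K]
  exact Finset.sum_congr rfl fun K _ => integral_cexp_mul_exp (hre K)

theorem gauss_transform_discrete_torus_general (d : ℕ) (N : Fin d → ℕ)
    (hN : ∀ j, 0 < N j) (s : ℂ) (hs : 0 < (s ^ 2).re) :
    IntegrableOn (fun t : ℝ =>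
        Complex.exp (-s ^ 2 * (t : ℂ)) * ((Real.exp (-(2 * d * t)) : ℝ) : ℂ) *
          ((besselI 0 (2 * t) : ℝ) : ℂ) ^ d) (Set.Ioi (0:ℝ)) ∧
    IntegrableOn (fun t : ℝ =>
        Complex.exp (-s ^ 2 * (t : ℂ)) *
          (((discTheta d N t : ℝ) : ℂ) - ((∏ j, (N j : ℝ)) : ℝ) *
            ((Real.exp (-(2 * d * t)) : ℝ) : ℂ) * ((besselI 0 (2 * t) : ℝ) : ℂ) ^ d - 1))
      (Set.Ioi (0:ℝ)) ∧
    ∑ K ∈ Finset.univ.filter (fun K : (j : Fin d) → Fin (N j) => Lam d N K ≠ 0),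
        2 * s / (s ^ 2 + ((Lam d N K : ℝ) : ℂ))
      = ((∏ j, (N j : ℝ) : ℝ) : ℂ) * (2 * s) *
          (∫ t in Set.Ioi (0:ℝ),
            Complex.exp (-s ^ 2 * (t : ℂ)) * ((Real.exp (-(2 * d * t)) : ℝ) : ℂ) *
              ((besselI 0 (2 * t) : ℝ) : ℂ) ^ d) +
        2 * s *
          (∫ t in Set.Ioi (0:ℝ),
            Complex.exp (-s ^ 2 * (t : ℂ)) *
              (((discTheta d N t : ℝ) : ℂ) - ((∏ j, (N j : ℝ)) : ℝ) *
                ((Real.exp (-(2 * d * t)) : ℝ) : ℂ) * ((besselI 0 (2 * t) : ℝ) : ℂ) ^ d - 1)) := by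
  have hs' : (-s ^ 2).re < 0 := by rw [Complex.neg_re]; linarith
  have int₁ := integrableOn_cexp_mul_exp_mul_besselI_pow hs' d 0
  have int₂ := integrableOn_cexp_mul_of_norm_le hs' (by fun_prop) fun t ht =>
    norm_discTheta_sub_mul_exp_mul_besselI_pow_sub_one_le d N 0 ht.le
  refine ⟨int₁, int₂, ?_⟩
  calc ∑ K ∈ Finset.univ.filter (fun K : (j : Fin d) → Fin (N j) => Lam d N K ≠ 0),
        2 * s / (s ^ 2 + ((Lam d N K : ℝ) : ℂ))
      = 2 * s * ∫ t in Ioi (0 : ℝ), Complex.exp (-s ^ 2 * t) * ((discTheta d N t : ℂ) - 1) := by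
        rw [integral_cexp_mul_discTheta_sub_one d N hN hs, Finset.mul_sum]
        simp only [mul_one_div]
    _ = _ := by
        rw [mul_comm ((∏ j, (N j : ℝ) : ℝ) : ℂ), mul_assoc (2 * s), ← mul_add,
          ← integral_const_mul ((∏ j, (N j : ℝ) : ℝ) : ℂ), ← integral_add (int₁.const_mul _) int₂]
        congr 2 with t
        ring

/-- The Gauss transform identity for the heat trace of the discrete torus. -/
theorem gauss_transform_discrete_torus (d : ℕ) (hd : 1 ≤ d) (N : Fin d → ℕ)
    (hN : ∀ j, 0 < N j) (s : ℂ) (hs : 0 < (s ^ 2).re) :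
    IntegrableOn (fun t : ℝ =>
        Complex.exp (-s ^ 2 * (t : ℂ)) * ((Real.exp (-(2 * d * t)) : ℝ) : ℂ) *
          ((besselI 0 (2 * t) : ℝ) : ℂ) ^ d) (Set.Ioi (0:ℝ)) ∧
    IntegrableOn (fun t : ℝ =>
        Complex.exp (-s ^ 2 * (t : ℂ)) *
          (((discTheta d N t : ℝ) : ℂ) - ((∏ j, (N j : ℝ)) : ℝ) *
            ((Real.exp (-(2 * d * t)) : ℝ) : ℂ) * ((besselI 0 (2 * t) : ℝ) : ℂ) ^ d - 1))
      (Set.Ioi (0:ℝ)) ∧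
    ∑ K ∈ Finset.univ.filter (fun K : (j : Fin d) → Fin (N j) => Lam d N K ≠ 0),
        2 * s / (s ^ 2 + ((Lam d N K : ℝ) : ℂ))
      = ((∏ j, (N j : ℝ) : ℝ) : ℂ) * (2 * s) *
          (∫ t in Set.Ioi (0:ℝ),
            Complex.exp (-s ^ 2 * (t : ℂ)) * ((Real.exp (-(2 * d * t)) : ℝ) : ℂ) *
              ((besselI 0 (2 * t) : ℝ) : ℂ) ^ d) +
        2 * s *
          (∫ t in Set.Ioi (0:ℝ),
            Complex.exp (-s ^ 2 * (t : ℂ)) *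
              (((discTheta d N t : ℝ) : ℂ) - ((∏ j, (N j : ℝ)) : ℝ) *
                ((Real.exp (-(2 * d * t)) : ℝ) : ℂ) * ((besselI 0 (2 * t) : ℝ) : ℂ) ^ d - 1)) :=
  gauss_transform_discrete_torus_general d N hN s hs
end

section
/- For every real ε with 0 < ε < π/2 and every real t > 0, one has 0 ≤ e^{−t} I_0(t) ≤ C · t^{−1/2}, where C = 1/√((2 − ε²/6)π) + ((π − ε)/π) · 1/√((1 − ε²/12) ε² e). -/
open MeasureTheory Real Filter

/-!
Since `e^{-t} I_0(t) = (1/π) ∫_0^π e^{-t(1 - cos θ)} dθ`, split the integral at `ε`. On `[0, ε]` the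
Taylor bound `1 - cos θ ≥ θ²/2 - θ⁴/24 ≥ (1/2 - ε²/24) θ²` dominates the integrand by a Gaussian,
whose integral over the half-line is `√(π / ((1/2 - ε²/24) t)) / 2`. On `[ε, π]` the integrand is at
most `e^{-bt}` with `b = ε²/2 - ε⁴/24 ≤ 1 - cos ε`, and `e^{-x} ≤ 1/√(2ex)` because `e·y ≤ e^y`.
-/

namespace Real

theorem cos_le_one_sub_sq_div_two_add_pow_four_div (x : ℝ) :
    cos x ≤ 1 - x ^ 2 / 2 + x ^ 4 / 24 := by
  wlog hx : 0 ≤ x generalizing x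
  · simpa [Even.neg_pow (by decide : Even 4)] using this (-x) (by linarith)
  let f : ℝ → ℝ := fun y ↦ 1 - y ^ 2 / 2 + y ^ 4 / 24 - cos y
  have hf : ∀ y, HasDerivAt f (sin y - (y - y ^ 3 / 6)) y := fun y ↦ by
    refine ((((hasDerivAt_const y 1).sub ((hasDerivAt_pow 2 y).div_const 2)).add
      ((hasDerivAt_pow 4 y).div_const 24)).sub (hasDerivAt_cos y)).congr_deriv ?_
    push_cast
    ring
  have hmono : MonotoneOn f (Set.Ici 0) :=
    monotoneOn_of_hasDerivWithinAt_nonneg (convex_Ici 0) (by fun_prop)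
      (fun y _ ↦ (hf y).hasDerivWithinAt) fun y hy ↦
        sub_nonneg.2 (sin_ge_sub_cube (interior_subset hy))
  simpa [f] using hmono Set.self_mem_Ici hx hx

theorem exp_neg_le_one_div_sqrt {x : ℝ} (hx : 0 < x) :
    exp (-x) ≤ 1 / √(2 * exp 1 * x) := by
  have hsq : 2 * exp 1 * x ≤ exp x ^ 2 := by
    rw [← exp_nat_mul]
    push_cast
    linarith [exp_one_mul_le_exp (x := 2 * x)]
  rw [exp_neg, ← one_div]
  gcongr
  exact (sqrt_le_sqrt hsq).trans_eq (sqrt_sq (exp_nonneg x))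

theorem integral_exp_neg_mul_sq_le {c : ℝ} (hc : 0 < c) {a : ℝ} (ha : 0 ≤ a) :
    ∫ θ in (0)..a, exp (-c * θ ^ 2) ≤ √(π / c) / 2 := by
  rw [← integral_gaussian_Ioi c, intervalIntegral.integral_of_le ha]
  exact setIntegral_mono_set (integrable_exp_neg_mul_sq hc).integrableOn
    (.of_forall fun _ ↦ (exp_pos _).le) Set.Ioc_subset_Ioi_self.eventuallyLE

end Real

theorem besselI_zero_nonneg (t : ℝ) : 0 ≤ besselI 0 t := by
  have := intervalIntegral.integral_nonneg (μ := volume) pi_pos.le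
    fun θ (_ : θ ∈ Set.Icc 0 π) ↦ (exp_pos (t * cos θ)).le
  simp only [besselI, Int.cast_zero, zero_mul, cos_zero, mul_one]
  positivity

theorem exp_neg_mul_besselI_zero (t : ℝ) :
    exp (-t) * besselI 0 t = (1 / π) * ∫ θ in (0)..π, exp (t * (cos θ - 1)) := by
  simp only [besselI, Int.cast_zero, zero_mul, cos_zero, mul_one, mul_sub,
    exp_sub, div_eq_mul_inv (exp _), intervalIntegral.integral_mul_const, exp_neg]
  ring

theorem integral_exp_mul_cos_sub_one_near_zero_le {ε t : ℝ} (hε₀ : 0 ≤ ε) (hε : ε ^ 2 < 12)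
    (ht : 0 < t) :
    ∫ θ in (0)..ε, exp (t * (cos θ - 1)) ≤ π / √((2 - ε ^ 2 / 6) * π * t) := by
  set c := (1 / 2 - ε ^ 2 / 24) * t
  have hc : 0 < c := mul_pos (by linarith) ht
  have hpointwise : ∀ θ ∈ Set.Icc 0 ε, exp (t * (cos θ - 1)) ≤ exp (-c * θ ^ 2) := by
    rintro θ ⟨hθ₀, hθε⟩
    have hθ4 : θ ^ 4 ≤ ε ^ 2 * θ ^ 2 := by
      have := pow_le_pow_left₀ hθ₀ hθε 2
      nlinarith [sq_nonneg θ]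
    have hcos := cos_le_one_sub_sq_div_two_add_pow_four_div θ
    have hgap : cos θ - 1 ≤ -(1 / 2 - ε ^ 2 / 24) * θ ^ 2 := by nlinarith
    rw [exp_le_exp, show -c * θ ^ 2 = t * (-(1 / 2 - ε ^ 2 / 24) * θ ^ 2) by ring]
    exact mul_le_mul_of_nonneg_left hgap ht.le
  have hsqrt : √(π / c) / 2 = π / √((2 - ε ^ 2 / 6) * π * t) := by
    have hpos : 0 < √((2 - ε ^ 2 / 6) * π * t) :=
      sqrt_pos.2 (mul_pos (mul_pos (by linarith) pi_pos) ht)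
    rw [eq_div_iff hpos.ne', div_mul_eq_mul_div, ← sqrt_mul (by positivity),
      show π / c * ((2 - ε ^ 2 / 6) * π * t) = (2 * π) ^ 2 by field_simp; ring,
      sqrt_sq (by positivity)]
    ring
  calc ∫ θ in (0)..ε, exp (t * (cos θ - 1))
      ≤ ∫ θ in (0)..ε, exp (-c * θ ^ 2) :=
        intervalIntegral.integral_mono_on hε₀
          (Continuous.intervalIntegrable (by fun_prop) _ _)
          (Continuous.intervalIntegrable (by fun_prop) _ _) hpointwise
    _ ≤ √(π / c) / 2 := integral_exp_neg_mul_sq_le hc hε₀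
    _ = π / √((2 - ε ^ 2 / 6) * π * t) := hsqrt

theorem integral_exp_mul_cos_sub_one_away_from_zero_le {ε t : ℝ} (hε₀ : 0 < ε) (hεπ : ε ≤ π)
    (hε : ε ^ 2 < 12) (ht : 0 < t) :
    ∫ θ in ε..π, exp (t * (cos θ - 1)) ≤ (π - ε) / √((1 - ε ^ 2 / 12) * ε ^ 2 * exp 1 * t) := by
  set b := (1 - ε ^ 2 / 12) * ε ^ 2 / 2
  have hb : 0 < b := by
    have : 0 < 1 - ε ^ 2 / 12 := by linarith
    positivity
  have hpointwise : ∀ θ ∈ Set.Icc ε π, exp (t * (cos θ - 1)) ≤ exp (-(b * t)) := by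
    rintro θ ⟨hεθ, hθπ⟩
    have hcos := cos_le_cos_of_nonneg_of_le_pi hε₀.le hθπ hεθ
    have hcosε := cos_le_one_sub_sq_div_two_add_pow_four_div ε
    have hgap : cos θ - 1 ≤ -b := by linarith [show b = ε ^ 2 / 2 - ε ^ 4 / 24 by ring]
    rw [exp_le_exp, show -(b * t) = t * -b by ring]
    exact mul_le_mul_of_nonneg_left hgap ht.le
  calc ∫ θ in ε..π, exp (t * (cos θ - 1))
      ≤ ∫ _ in ε..π, exp (-(b * t)) :=
        intervalIntegral.integral_mono_on hεπ
          (Continuous.intervalIntegrable (by fun_prop) _ _)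
          (Continuous.intervalIntegrable (by fun_prop) _ _) hpointwise
    _ = (π - ε) * exp (-(b * t)) := by simp
    _ ≤ (π - ε) * (1 / √(2 * exp 1 * (b * t))) := by
        gcongr
        exact exp_neg_le_one_div_sqrt (mul_pos hb ht)
    _ = (π - ε) / √((1 - ε ^ 2 / 12) * ε ^ 2 * exp 1 * t) := by
        rw [mul_one_div]; congr 2; ring

/-- Uniform bound `0 ≤ e^{-t} I_0(t) ≤ C t^{-1/2}` with the explicit constant `C`. -/
theorem besselI_zero_bound (ε : ℝ) (hε0 : 0 < ε) (hε : ε < Real.pi / 2) (t : ℝ) (ht : 0 < t) :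
    0 ≤ Real.exp (-t) * besselI 0 t ∧
    Real.exp (-t) * besselI 0 t ≤
      (1 / Real.sqrt ((2 - ε ^ 2 / 6) * Real.pi) +
        ((Real.pi - ε) / Real.pi) *
          (1 / Real.sqrt ((1 - ε ^ 2 / 12) * ε ^ 2 * Real.exp 1))) * t ^ (-(1:ℝ) / 2) := by
  refine ⟨mul_nonneg (exp_nonneg _) (besselI_zero_nonneg t), ?_⟩
  have hεπ : ε ≤ π := by linarith [pi_pos]
  have hε2 : ε ^ 2 < 12 := by nlinarith [pi_lt_d2]
  have hA : 0 < (2 - ε ^ 2 / 6) * π := mul_pos (by linarith) pi_pos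
  have hB : 0 < (1 - ε ^ 2 / 12) * ε ^ 2 * exp 1 := by
    have : 0 < 1 - ε ^ 2 / 12 := by linarith
    positivity
  rw [exp_neg_mul_besselI_zero, ← intervalIntegral.integral_add_adjacent_intervals
    (b := ε) (Continuous.intervalIntegrable (by fun_prop) _ _)
    (Continuous.intervalIntegrable (by fun_prop) _ _)]
  calc 1 / π * ((∫ θ in (0)..ε, exp (t * (cos θ - 1))) + ∫ θ in ε..π, exp (t * (cos θ - 1)))
      ≤ 1 / π * (π / √((2 - ε ^ 2 / 6) * π * t)
          + (π - ε) / √((1 - ε ^ 2 / 12) * ε ^ 2 * exp 1 * t)) := by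
        gcongr
        · exact integral_exp_mul_cos_sub_one_near_zero_le hε0.le hε2 ht
        · exact integral_exp_mul_cos_sub_one_away_from_zero_le hε0 hεπ hε2 ht
    _ = _ := by
        rw [show -(1 : ℝ) / 2 = -(1 / 2) by ring, rpow_neg ht.le, ← sqrt_eq_rpow,
          sqrt_mul hA.le, sqrt_mul hB.le]
        have := sqrt_pos.2 ht
        have := sqrt_pos.2 hA
        have := sqrt_pos.2 hB
        field_simp
end

section
/- For every real x ≥ 1 and every real t > 0, define h_x(t) = √(x² + t²) − t + x·log(t/(x + √(x² + t²))). Then exp(h_x(t)) ≤ (t/(t + x))^{x/2}. -/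
open Real

/-! Taking logarithms and writing `s = √(x²+t²)`, so that `s - t = x² / (s + t)`, the claim
becomes `s - t ≤ x · log ((x + s) / √(t (t + x)))`. By AM-GM, `√(t (t + x)) ≤ t + x/2`, and the
Padé-type bound `log (a / b) ≥ 2 (a - b) / (a + b)` (for `b ≤ a`) with `a = x + s`, `b = t + x/2`
reduces it to `x / (s + t) ≤ (2 (s - t) + x) / (s + t + 3x/2)`, which after clearing
denominators is `3x²/2 ≤ 2x²`. -/

namespace Real

theorem two_mul_sub_div_add_le_log_div {a b : ℝ} (hb : 0 < b) (hba : b ≤ a) :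
    2 * (a - b) / (a + b) ≤ log (a / b) := by
  have hab : 0 < a + b := by linarith
  have hy₀ : 0 ≤ (a - b) / (a + b) := div_nonneg (by linarith) hab.le
  have hy₁ : (a - b) / (a + b) < 1 := (div_lt_one hab).2 (by linarith)
  have hquot : (1 + (a - b) / (a + b)) / (1 - (a - b) / (a + b)) = a / b := by
    field_simp [hb.ne']
    ring
  have hseries := sum_range_le_log_div hy₀ hy₁ 1
  simp only [Finset.sum_range_one, mul_zero, zero_add, pow_one, CharP.cast_eq_zero, div_one,
    hquot] at hseries
  rw [mul_div_assoc]
  linarith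

theorem log_add_log_le_two_mul_log_add_div_two {a b : ℝ} (ha : 0 < a) (hb : 0 < b) :
    log a + log b ≤ 2 * log ((a + b) / 2) := by
  have h := log_le_log (mul_pos ha hb) (by nlinarith [sq_nonneg (a - b)] :
    a * b ≤ ((a + b) / 2) ^ 2)
  rwa [log_mul ha.ne' hb.ne', log_pow, Nat.cast_ofNat] at h

end Real

theorem sqrt_sq_add_sq_sub_le_mul_log {x t : ℝ} (hx : 0 < x) (ht : 0 < t) :
    √(x ^ 2 + t ^ 2) - t ≤ x * log ((x + √(x ^ 2 + t ^ 2)) / (t + x / 2)) := by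
  set s := √(x ^ 2 + t ^ 2)
  have hs : s ^ 2 = x ^ 2 + t ^ 2 := sq_sqrt (by positivity)
  have hts : t ≤ s := le_sqrt_of_sq_le (by nlinarith)
  have hst : 0 < s + t := by linarith
  calc s - t = x * (x / (s + t)) := by
        field_simp
        linear_combination hs
    _ ≤ x * (2 * ((x + s) - (t + x / 2)) / ((x + s) + (t + x / 2))) := by
        refine mul_le_mul_of_nonneg_left ?_ hx.le
        rw [div_le_div_iff₀ hst (by linarith)]
        nlinarith
    _ ≤ x * log ((x + s) / (t + x / 2)) := by
        gcongr
        exact two_mul_sub_div_add_le_log_div (by positivity) (by linarith)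

/-- For `x ≥ 1` and `t > 0`, with `h_x(t) = √(x²+t²) - t + x·log(t/(x+√(x²+t²)))`, one has
`exp(h_x(t)) ≤ (t/(t+x))^{x/2}`. -/
theorem exp_h_le (x : ℝ) (hx : 1 ≤ x) (t : ℝ) (ht : 0 < t) :
    Real.exp (Real.sqrt (x ^ 2 + t ^ 2) - t +
        x * Real.log (t / (x + Real.sqrt (x ^ 2 + t ^ 2))))
      ≤ (t / (t + x)) ^ (x / 2) := by
  have hx₀ : 0 < x := by linarith
  have hxs : 0 < x + √(x ^ 2 + t ^ 2) := by positivity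
  have hmain := sqrt_sq_add_sq_sub_le_mul_log hx₀ ht
  have hamgm : x * (log t + log (t + x)) ≤ x * (2 * log (t + x / 2)) := by
    refine mul_le_mul_of_nonneg_left ?_ hx₀.le
    have h := log_add_log_le_two_mul_log_add_div_two ht (by positivity : 0 < t + x)
    rwa [show (t + (t + x)) / 2 = t + x / 2 by ring] at h
  rw [rpow_def_of_pos (by positivity), exp_le_exp, log_div ht.ne' hxs.ne',
    log_div ht.ne' (by positivity)]
  rw [log_div hxs.ne' (by positivity)] at hmain
  linarith
end

section
/- Fix a real t > 0 and positive integers x and n₀. Then for every integer n ≥ n₀, one has 0 ≤ √(n²t) · e^{−n²t} · I_{nx}(n²t) ≤ (n₀t/(x + n₀t))^{n₀x/2} = (1 + x/(n₀t))^{−n₀x/2}. -/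
/-!
Nonnegativity: expanding `e^{s cos θ}` into its power series reduces it to
`∫₀^π cos^n θ cos kθ dθ ≥ 0`, which follows by induction on `n` from
`2 cos θ cos kθ = cos (k-1)θ + cos (k+1)θ`.

Upper bound: `z ↦ exp (s cos z + i k z)` is entire and `2π`-periodic, so its integral over
`[-π, π]` may be moved to the line `Im z = u`, which gives `I_k(s) ≤ e^{-ku} I_0(s cosh u)`.
Jordan's inequality `cos θ ≤ 1 - 2θ²/π²` and a Gaussian integral give `I_0(r) ≤ e^r / √r`.
Taking `e^u = 1 + k/s` and using `log (1 + a) ≥ a/(1 + a)` yields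
`√s e^{-s} I_k(s) ≤ (1 + k/s)^{-k/2}`. For `k = nx`, `s = n²t` the right-hand side is
`((1 + x/(nt))^{nt})^{-x/(2t)}`, and `m ↦ (1 + c/m)^m` is increasing by Bernoulli's inequality.
-/

open Real

theorem intervalIntegral_neg_eq_two_mul_of_even {f : ℝ → ℝ} (hf : Continuous f)
    (heven : ∀ x, f (-x) = f x) (a : ℝ) :
    ∫ x in -a..a, f x = 2 * ∫ x in 0..a, f x := by
  have hleft : ∫ x in -a..0, f x = ∫ x in 0..a, f x := by
    simpa [heven] using (intervalIntegral.integral_comp_neg (a := 0) (b := a) f).symm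
  rw [← intervalIntegral.integral_add_adjacent_intervals (hf.intervalIntegrable _ 0)
    (hf.intervalIntegrable _ _), hleft, two_mul]

open Complex in
theorem intervalIntegral_comp_add_mul_I_of_periodic {F : ℂ → ℂ} {a b : ℝ}
    (hF : Differentiable ℂ F) (hper : Function.Periodic F (b - a)) (y : ℝ) :
    ∫ x : ℝ in a..b, F (x + y * I) = ∫ x : ℝ in a..b, F x := by
  have hsides : ∀ v : ℝ, F (b + v * I) = F (a + v * I) := fun v => by
    rw [← hper (a + v * I)]
    congr 1
    ring
  have hrect := integral_boundary_rect_eq_zero_of_differentiableOn F a (b + y * I)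
    hF.differentiableOn
  simp only [ofReal_re, ofReal_im, add_re, add_im, mul_re, mul_im, I_re, I_im] at hrect
  simp only [mul_zero, sub_zero, mul_one, zero_mul, add_zero, ofReal_zero, zero_add,
    hsides] at hrect
  linear_combination -hrect

theorem integral_cos_pow_mul_cos_nonneg (n : ℕ) (k : ℤ) :
    0 ≤ ∫ θ in 0..π, cos θ ^ n * cos (k * θ) := by
  induction n generalizing k with
  | zero =>
    rcases eq_or_ne k 0 with rfl | hk
    · simp [pi_pos.le]
    · simp [intervalIntegral.integral_comp_mul_left cos (Int.cast_ne_zero.2 hk), sin_int_mul_pi]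
  | succ n ih =>
    have hprod : ∀ θ : ℝ, cos θ ^ (n + 1) * cos (k * θ)
        = (cos θ ^ n * cos ((k - 1 : ℤ) * θ) + cos θ ^ n * cos ((k + 1 : ℤ) * θ)) / 2 :=
        fun θ => by
      push_cast
      rw [sub_mul, add_mul, one_mul, cos_sub, cos_add]
      ring
    have hint : ∀ j : ℤ,
        IntervalIntegrable (fun θ => cos θ ^ n * cos (j * θ)) MeasureTheory.volume 0 π := fun j =>
      (by fun_prop : Continuous fun θ => cos θ ^ n * cos (j * θ)).intervalIntegrable _ _
    simp only [hprod, intervalIntegral.integral_div,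
      intervalIntegral.integral_add (hint _) (hint _)]
    exact div_nonneg (add_nonneg (ih _) (ih _)) zero_le_two

theorem besselI_nonneg (k : ℤ) {s : ℝ} (hs : 0 ≤ s) : 0 ≤ besselI k s := by
  have hsum : HasSum (fun n : ℕ => s ^ n / n.factorial * ∫ θ in 0..π, cos θ ^ n * cos (k * θ))
      (∫ θ in 0..π, exp (s * cos θ) * cos (k * θ)) := by
    simp_rw [← intervalIntegral.integral_const_mul]
    refine intervalIntegral.hasSum_integral_of_dominated_convergence
      (fun n _ => s ^ n / n.factorial) (fun n => by fun_prop)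
      (fun n => Filter.Eventually.of_forall fun θ _ => ?_)
      (Filter.Eventually.of_forall fun θ _ => summable_pow_div_factorial s)
      intervalIntegrable_const (Filter.Eventually.of_forall fun θ _ => ?_)
    · rw [norm_mul, Real.norm_of_nonneg (by positivity)]
      refine mul_le_of_le_one_right (by positivity) ?_
      rw [norm_mul, norm_pow]
      exact mul_le_one₀ (pow_le_one₀ (norm_nonneg _) (abs_cos_le_one _)) (norm_nonneg _)
        (abs_cos_le_one _)
    · have h := (NormedSpace.expSeries_div_hasSum_exp (s * cos θ)).mul_right (cos (k * θ))
      rw [← exp_eq_exp_ℝ] at h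
      exact h.congr_fun fun n => by ring
  unfold besselI
  exact mul_nonneg (by positivity) <| hsum.nonneg fun n =>
    mul_nonneg (by positivity) (integral_cos_pow_mul_cos_nonneg n k)

theorem besselI_eq_integral_neg_pi_pi (k : ℤ) (s : ℝ) :
    besselI k s = (2 * π)⁻¹ * ∫ θ in -π..π, exp (s * cos θ) * cos (k * θ) := by
  rw [intervalIntegral_neg_eq_two_mul_of_even (by fun_prop) (fun θ => by simp), besselI]
  ring

theorem integral_exp_mul_cos_mul_cos_le (k : ℤ) (s u : ℝ) :
    ∫ θ in -π..π, exp (s * cos θ) * cos (k * θ)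
      ≤ exp (-(k * u)) * ∫ θ in -π..π, exp (s * cosh u * cos θ) := by
  set G : ℂ → ℂ := fun z => Complex.exp (s * Complex.cos z + k * z * Complex.I)
  have hG : Differentiable ℂ G := by fun_prop
  have hper : Function.Periodic G ((π : ℝ) - ((-π : ℝ) : ℂ)) := fun z => by
    rw [show ((π : ℝ) : ℂ) - ((-π : ℝ) : ℂ) = 2 * π by push_cast; ring]
    simp only [G, Complex.cos_add_two_pi]
    rw [show (s : ℂ) * Complex.cos z + k * (z + 2 * π) * Complex.I
        = s * Complex.cos z + k * z * Complex.I + k * (2 * π * Complex.I) by ring,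
      Complex.exp_add, Complex.exp_int_mul_two_pi_mul_I, mul_one]
  have hre : ∀ θ : ℝ, (G θ).re = exp (s * cos θ) * cos (k * θ) := fun θ => by
    simp [G, Complex.exp_re, ← Complex.ofReal_cos]
  have hshift : ∀ θ : ℝ,
      (G (θ + u * Complex.I)).re ≤ exp (-(k * u)) * exp (s * cosh u * cos θ) := fun θ => by
    refine (Complex.re_le_norm _).trans_eq ?_
    rw [Complex.norm_exp, ← Real.exp_add]
    congr 1
    simp [Complex.cos_add_mul_I, ← Complex.ofReal_cos, ← Complex.ofReal_sin,
      ← Complex.ofReal_cosh, ← Complex.ofReal_sinh]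
    ring
  have hcont : ∀ v : ℝ, Continuous fun θ : ℝ => G (θ + v * Complex.I) := fun v => by fun_prop
  calc ∫ θ in -π..π, exp (s * cos θ) * cos (k * θ)
      = (∫ θ in -π..π, G (θ + (0 : ℝ) * Complex.I)).re := by
        simpa [hre] using
          intervalIntegral.intervalIntegral_re ((hcont 0).intervalIntegrable (-π) π)
    _ = (∫ θ in -π..π, G (θ + u * Complex.I)).re := by
        rw [intervalIntegral_comp_add_mul_I_of_periodic hG hper,
          intervalIntegral_comp_add_mul_I_of_periodic hG hper]
    _ = ∫ θ in -π..π, (G (θ + u * Complex.I)).re :=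
        (intervalIntegral.intervalIntegral_re ((hcont u).intervalIntegrable _ _)).symm
    _ ≤ ∫ θ in -π..π, exp (-(k * u)) * exp (s * cosh u * cos θ) :=
        intervalIntegral.integral_mono_on (by linarith [pi_pos])
          ((Complex.continuous_re.comp (hcont u)).intervalIntegrable _ _)
          ((by fun_prop : Continuous fun θ => exp (-(k * u)) * exp (s * cosh u * cos θ)
            ).intervalIntegrable _ _) fun θ _ => hshift θ
    _ = _ := intervalIntegral.integral_const_mul _ _

theorem integral_exp_mul_cos_le_sqrt {r : ℝ} (hr : 0 < r) :
    ∫ θ in -π..π, exp (r * cos θ) ≤ √(π / (2 / π ^ 2 * r)) * exp r := by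
  have hjordan : ∀ θ ∈ Set.Icc (-π) π,
      exp (r * cos θ) ≤ exp r * exp (-(2 / π ^ 2 * r) * θ ^ 2) := fun θ hθ => by
    rw [← exp_add, exp_le_exp]
    have := cos_le_one_sub_mul_cos_sq (abs_le.2 hθ)
    nlinarith
  have hgauss : MeasureTheory.Integrable fun θ : ℝ => exp (-(2 / π ^ 2 * r) * θ ^ 2) :=
    integrable_exp_neg_mul_sq (by positivity)
  calc ∫ θ in -π..π, exp (r * cos θ)
      ≤ ∫ θ in -π..π, exp r * exp (-(2 / π ^ 2 * r) * θ ^ 2) :=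
        intervalIntegral.integral_mono_on (by linarith [pi_pos])
          ((by fun_prop : Continuous fun θ => exp (r * cos θ)).intervalIntegrable _ _)
          (hgauss.intervalIntegrable.const_mul _) hjordan
    _ ≤ exp r * ∫ θ, exp (-(2 / π ^ 2 * r) * θ ^ 2) := by
        rw [intervalIntegral.integral_const_mul,
          intervalIntegral.integral_of_le (by linarith [pi_pos])]
        exact mul_le_mul_of_nonneg_left
          (MeasureTheory.setIntegral_le_integral hgauss (.of_forall fun θ => (exp_pos _).le))
          (exp_pos r).le
    _ = √(π / (2 / π ^ 2 * r)) * exp r := by rw [integral_gaussian, mul_comm]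

theorem besselI_le_exp_div_sqrt (k : ℤ) {s : ℝ} (hs : 0 < s) (u : ℝ) :
    besselI k s ≤ exp (s * cosh u - k * u) / √s := by
  set r := s * cosh u
  have hsr : s ≤ r := le_mul_of_one_le_right hs.le (one_le_cosh u)
  have hr : 0 < r := hs.trans_le hsr
  have hconst : (2 * π)⁻¹ * √(π / (2 / π ^ 2 * r)) ≤ 1 / √s := by
    have hsq : (2 * π)⁻¹ ^ 2 * (π / (2 / π ^ 2 * r)) = π / (8 * r) := by
      field_simp
      ring
    rw [one_div, ← sqrt_inv, ← sqrt_sq (by positivity : (0:ℝ) ≤ (2 * π)⁻¹),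
      ← sqrt_mul (by positivity), hsq]
    refine sqrt_le_sqrt ?_
    rw [div_le_iff₀ (by positivity), inv_mul_eq_div, le_div_iff₀ hs]
    nlinarith [pi_le_four]
  calc besselI k s
      ≤ (2 * π)⁻¹ * (exp (-(k * u)) * (√(π / (2 / π ^ 2 * r)) * exp r)) := by
        rw [besselI_eq_integral_neg_pi_pi]
        gcongr
        exact (integral_exp_mul_cos_mul_cos_le k s u).trans
          (mul_le_mul_of_nonneg_left (integral_exp_mul_cos_le_sqrt hr) (exp_pos _).le)
    _ = (2 * π)⁻¹ * √(π / (2 / π ^ 2 * r)) * exp (r - k * u) := by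
        rw [sub_eq_add_neg, exp_add]; ring
    _ ≤ 1 / √s * exp (r - k * u) := by gcongr
    _ = exp (r - k * u) / √s := by ring

theorem mul_cosh_log_one_add_div_sub_le {k s : ℝ} (hk : 0 ≤ k) (hs : 0 < s) :
    s * cosh (log (1 + k / s)) - s - k * log (1 + k / s) ≤ -(k / 2 * log (1 + k / s)) := by
  have ha : 0 < 1 + k / s := by positivity
  have hcosh : s * cosh (log (1 + k / s)) - s = k / 2 * (1 - (1 + k / s)⁻¹) := by
    rw [cosh_log ha]
    field_simp
    ring
  rw [hcosh]
  nlinarith [one_sub_inv_le_log_of_pos ha]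

theorem sqrt_mul_exp_neg_mul_besselI_le (k : ℕ) {s : ℝ} (hs : 0 < s) :
    √s * exp (-s) * besselI k s ≤ (1 + k / s) ^ (-(k : ℝ) / 2) := by
  set u := log (1 + k / s) with hu
  calc √s * exp (-s) * besselI k s
      ≤ √s * exp (-s) * (exp (s * cosh u - k * u) / √s) := by
        gcongr
        exact besselI_le_exp_div_sqrt k hs u
    _ = exp (s * cosh u - s - k * u) := by
        field_simp [(sqrt_pos.2 hs).ne']
        rw [← exp_add]
        ring_nf
    _ ≤ exp (-(k / 2 * u)) := exp_le_exp.2 (mul_cosh_log_one_add_div_sub_le k.cast_nonneg hs)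
    _ = (1 + k / s) ^ (-(k : ℝ) / 2) := by
        rw [hu, rpow_def_of_pos (by positivity)]
        ring_nf

theorem one_add_div_rpow_le_one_add_div_rpow {c m M : ℝ} (hc : 0 ≤ c) (hm : 0 < m)
    (hmM : m ≤ M) : (1 + c / m) ^ m ≤ (1 + c / M) ^ M := by
  have hM : 0 < M := hm.trans_le hmM
  have hbernoulli : 1 + c / m ≤ (1 + c / M) ^ (M / m) := by
    have := one_add_mul_self_le_rpow_one_add (s := c / M) (by linarith [div_nonneg hc hM.le])
      ((one_le_div hm).2 hmM)
    rwa [div_mul_div_cancel₀' hM.ne'] at this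
  calc (1 + c / m) ^ m ≤ ((1 + c / M) ^ (M / m)) ^ m :=
        rpow_le_rpow (by positivity) hbernoulli hm.le
    _ = (1 + c / M) ^ M := by rw [← rpow_mul (by positivity), div_mul_cancel₀ _ hm.ne']

theorem rescaled_besselI_uniform_bound_general (t : ℝ) (ht : 0 < t) (x n₀ : ℕ)
    (hn₀ : 0 < n₀) (n : ℕ) (hn : n₀ ≤ n) :
    (0 ≤ Real.sqrt ((n : ℝ) ^ 2 * t) * Real.exp (-((n : ℝ) ^ 2 * t)) *
        besselI ((n : ℤ) * (x : ℤ)) ((n : ℝ) ^ 2 * t)) ∧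
    (Real.sqrt ((n : ℝ) ^ 2 * t) * Real.exp (-((n : ℝ) ^ 2 * t)) *
        besselI ((n : ℤ) * (x : ℤ)) ((n : ℝ) ^ 2 * t)
      ≤ ((n₀ : ℝ) * t / ((x : ℝ) + (n₀ : ℝ) * t)) ^ ((n₀ : ℝ) * (x : ℝ) / 2)) ∧
    ((n₀ : ℝ) * t / ((x : ℝ) + (n₀ : ℝ) * t)) ^ ((n₀ : ℝ) * (x : ℝ) / 2)
      = (1 + (x : ℝ) / ((n₀ : ℝ) * t)) ^ (-((n₀ : ℝ) * (x : ℝ)) / 2) := by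
  have hn₀t : 0 < (n₀ : ℝ) * t := by positivity
  have hnt : (n₀ : ℝ) * t ≤ n * t := by gcongr
  have hs : 0 < (n : ℝ) ^ 2 * t := by
    have : 0 < n := hn₀.trans_le hn
    positivity
  have hrescale : ∀ m : ℕ, (1 + x / (m * t)) ^ (-((m : ℝ) * x) / 2)
      = ((1 + x / (m * t)) ^ ((m : ℝ) * t)) ^ (-(x / (2 * t))) := fun m => by
    rw [← rpow_mul (by positivity)]
    congr 1
    field_simp
  have hlast : ((n₀ : ℝ) * t / (x + n₀ * t)) ^ ((n₀ : ℝ) * x / 2)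
      = (1 + x / (n₀ * t)) ^ (-((n₀ : ℝ) * x) / 2) := by
    rw [neg_div, rpow_neg (by positivity), ← inv_rpow (by positivity)]
    congr 1
    field_simp
    ring
  have hcast : ((n : ℤ) * (x : ℤ)) = ((n * x : ℕ) : ℤ) := by push_cast; rfl
  refine ⟨by positivity [besselI_nonneg ((n : ℤ) * (x : ℤ)) hs.le], ?_, hlast⟩
  calc √((n : ℝ) ^ 2 * t) * exp (-((n : ℝ) ^ 2 * t)) *
        besselI ((n : ℤ) * (x : ℤ)) ((n : ℝ) ^ 2 * t)
      ≤ (1 + x / (n * t)) ^ (-((n : ℝ) * x) / 2) := by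
        rw [hcast]
        convert sqrt_mul_exp_neg_mul_besselI_le (n * x) hs using 3
        · push_cast
          field_simp
        · push_cast
          ring
    _ = ((1 + x / (n * t)) ^ ((n : ℝ) * t)) ^ (-(x / (2 * t))) := hrescale n
    _ ≤ ((1 + x / (n₀ * t)) ^ ((n₀ : ℝ) * t)) ^ (-(x / (2 * t))) :=
        rpow_le_rpow_of_nonpos (by positivity)
          (one_add_div_rpow_le_one_add_div_rpow x.cast_nonneg hn₀t hnt)
          (neg_nonpos.2 (by positivity))
    _ = ((n₀ : ℝ) * t / (x + n₀ * t)) ^ ((n₀ : ℝ) * x / 2) := by rw [hlast, hrescale n₀]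

/-- Uniform bound for re-scaled Bessel functions: for `t > 0`, positive integers `x`, `n₀`
and any `n ≥ n₀`,
`0 ≤ √(n²t)·e^{-n²t}·I_{nx}(n²t) ≤ (n₀t/(x+n₀t))^{n₀x/2} = (1 + x/(n₀t))^{-n₀x/2}`. -/
theorem rescaled_besselI_uniform_bound (t : ℝ) (ht : 0 < t) (x n₀ : ℕ)
    (hx : 0 < x) (hn₀ : 0 < n₀) (n : ℕ) (hn : n₀ ≤ n) :
    (0 ≤ Real.sqrt ((n : ℝ) ^ 2 * t) * Real.exp (-((n : ℝ) ^ 2 * t)) *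
        besselI ((n : ℤ) * (x : ℤ)) ((n : ℝ) ^ 2 * t)) ∧
    (Real.sqrt ((n : ℝ) ^ 2 * t) * Real.exp (-((n : ℝ) ^ 2 * t)) *
        besselI ((n : ℤ) * (x : ℤ)) ((n : ℝ) ^ 2 * t)
      ≤ ((n₀ : ℝ) * t / ((x : ℝ) + (n₀ : ℝ) * t)) ^ ((n₀ : ℝ) * (x : ℝ) / 2)) ∧
    ((n₀ : ℝ) * t / ((x : ℝ) + (n₀ : ℝ) * t)) ^ ((n₀ : ℝ) * (x : ℝ) / 2)
      = (1 + (x : ℝ) / ((n₀ : ℝ) * t)) ^ (-((n₀ : ℝ) * (x : ℝ)) / 2) :=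
  rescaled_besselI_uniform_bound_general t ht x n₀ hn₀ n hn
end

section
/- Let n(u) be a sequence of positive integers indexed by positive integers u such that n(u)/u → α for some real α > 0 as u → ∞. Then for every real t > 0 and every integer k ≥ 0, lim_{u→∞} n(u) · e^{−2u²t} · I_{n(u)·k}(2u²t) = (α/√(4πt)) · e^{−(αk)²/(4t)}. -/
/-!
Substituting `θ = φ / n` turns `n e^{-s} I_{nk}(s)` into
`π⁻¹ ∫_0^{nπ} cos (kφ) e^{-s (1 - cos (φ / n))} dφ`. Since `1 - cos y = (y² / 2) sinc (y / 2)²`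
and `s / n² → 2t / α²` for `s = 2u²t`, the exponent tends to `(t / α²) φ²`, while
`1 - cos y ≥ 2y² / π²` on `[-π, π]` gives a Gaussian majorant. Dominated convergence then leaves
the half-line integral `∫_0^∞ cos (kφ) e^{-(t/α²) φ²} dφ`, half the Fourier transform of a Gaussian.
-/

open Real Filter MeasureTheory Set Topology

theorem integral_cos_mul_mul_exp_neg_mul_sq {a : ℝ} (ha : 0 < a) (b : ℝ) :
    ∫ x : ℝ, cos (b * x) * exp (-a * x ^ 2) = √(π / a) * exp (-b ^ 2 / (4 * a)) := by
  have ha' : 0 < (a : ℂ).re := by simpa using ha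
  have hint :
      Integrable fun x : ℝ => Complex.exp (Complex.I * b * x) * Complex.exp (-a * x ^ 2) := by
    simpa [← Complex.exp_add, mul_comm, add_comm] using
      integrable_cexp_quadratic ha' (Complex.I * b) 0
  have hre : ∀ x : ℝ, RCLike.re (Complex.exp (Complex.I * b * x) * Complex.exp (-a * x ^ 2)) =
      cos (b * x) * exp (-a * x ^ 2) := by
    intro x
    rw [show Complex.I * b * x = ((b * x : ℝ) : ℂ) * Complex.I by push_cast; ring,
      show -(a : ℂ) * x ^ 2 = ((-a * x ^ 2 : ℝ) : ℂ) by push_cast; ring, ← Complex.ofReal_exp,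
      RCLike.re_to_complex, Complex.re_mul_ofReal, Complex.exp_ofReal_mul_I_re]
  simp_rw [← hre]
  rw [integral_re hint, fourierIntegral_gaussian ha' b,
    show (π : ℂ) / a = ((π / a : ℝ) : ℂ) by push_cast; rfl,
    show -(b : ℂ) ^ 2 / (4 * a) = ((-b ^ 2 / (4 * a) : ℝ) : ℂ) by push_cast; rfl,
    ← Complex.ofReal_exp, show (1 / 2 : ℂ) = ((1 / 2 : ℝ) : ℂ) by norm_num,
    ← Complex.ofReal_cpow (by positivity), ← Complex.ofReal_mul, sqrt_eq_rpow]
  rfl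

theorem integral_Ioi_cos_mul_mul_exp_neg_mul_sq {a : ℝ} (ha : 0 < a) (b : ℝ) :
    ∫ x in Ioi 0, cos (b * x) * exp (-a * x ^ 2) = √(π / a) * exp (-b ^ 2 / (4 * a)) / 2 := by
  have heven : ∀ x, cos (b * |x|) * exp (-a * |x| ^ 2) = cos (b * x) * exp (-a * x ^ 2) := by
    intro x
    rcases abs_choice x with h | h <;> simp [h, mul_neg, cos_neg]
  have h := integral_comp_abs (f := fun x => cos (b * x) * exp (-a * x ^ 2))
  simp only [heven, integral_cos_mul_mul_exp_neg_mul_sq ha] at h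
  linarith

theorem one_sub_cos_eq_sq_mul_sinc_sq (y : ℝ) : 1 - cos y = y ^ 2 / 2 * sinc (y / 2) ^ 2 := by
  rcases eq_or_ne y 0 with rfl | hy
  · simp
  rw [sinc_of_ne_zero (by positivity), show cos y = cos (2 * (y / 2)) by congr 1; ring,
    cos_two_mul, cos_sq']
  field_simp
  ring

theorem natCast_mul_exp_neg_mul_besselI (N : ℕ) (k : ℤ) (s : ℝ) :
    N * exp (-s) * besselI (N * k) s =
      π⁻¹ * ∫ φ in 0..N * π, cos (k * φ) * exp (-(s * (1 - cos (φ / N)))) := by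
  rcases eq_or_ne (N : ℝ) 0 with hN | hN
  · simp [hN]
  have hθ : ∫ θ in 0..π, cos (k * (N * θ)) * exp (-(s * (1 - cos (N * θ / N)))) =
      exp (-s) * ∫ θ in 0..π, exp (s * cos θ) * cos (((N * k : ℤ) : ℝ) * θ) := by
    rw [← intervalIntegral.integral_const_mul]
    refine intervalIntegral.integral_congr fun θ _ => ?_
    rw [mul_div_cancel_left₀ θ hN, mul_one_sub, neg_sub, exp_sub, exp_neg, Int.cast_mul,
      Int.cast_natCast, mul_left_comm, ← mul_assoc]
    ring
  rw [← mul_zero (N : ℝ), ← intervalIntegral.smul_integral_comp_mul_left, smul_eq_mul, hθ,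
    besselI]
  ring

theorem tendsto_mul_one_sub_cos_div {ι : Type*} {l : Filter ι} {N s : ι → ℝ} {c : ℝ}
    (hN : Tendsto N l atTop) (hs : Tendsto (fun i => s i / N i ^ 2) l (𝓝 c)) (x : ℝ) :
    Tendsto (fun i => s i * (1 - cos (x / N i))) l (𝓝 (c / 2 * x ^ 2)) := by
  have hsinc : Tendsto (fun i => sinc (x / N i / 2)) l (𝓝 1) := by
    rw [← sinc_zero]
    refine (continuous_sinc.tendsto 0).comp ?_
    simpa using (tendsto_const_nhds.div_atTop hN).div_const 2
  convert (hs.mul_const (x ^ 2 / 2)).mul (hsinc.pow 2) using 2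
  · rw [one_sub_cos_eq_sq_mul_sinc_sq, div_pow]
    ring
  · ring

theorem mul_sq_le_mul_one_sub_cos_div {N s c φ : ℝ} (hN : 0 < N) (hc : 0 ≤ c)
    (hs : c ≤ s / N ^ 2) (hφ : |φ| ≤ N * π) :
    2 * c / π ^ 2 * φ ^ 2 ≤ s * (1 - cos (φ / N)) := by
  have hφN : |φ / N| ≤ π := by
    rw [abs_div, abs_of_pos hN, div_le_iff₀ hN, mul_comm]
    exact hφ
  have hs₀ : 0 ≤ s := by
    have := mul_nonneg (hc.trans hs) (sq_nonneg N)
    rwa [div_mul_cancel₀ _ (by positivity)] at this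
  calc 2 * c / π ^ 2 * φ ^ 2 ≤ 2 * (s / N ^ 2) / π ^ 2 * φ ^ 2 := by gcongr
    _ = s * (2 / π ^ 2 * (φ / N) ^ 2) := by field_simp
    _ ≤ s * (1 - cos (φ / N)) := by
      gcongr
      linarith [cos_le_one_sub_mul_cos_sq hφN]

theorem norm_cos_mul_exp_neg_mul_one_sub_cos_le {N s c φ : ℝ} (hN : 0 < N) (hc : 0 ≤ c)
    (hs : c ≤ s / N ^ 2) (hφ : |φ| ≤ N * π) (b : ℝ) :
    ‖cos (b * φ) * exp (-(s * (1 - cos (φ / N))))‖ ≤ exp (-(2 * c / π ^ 2) * φ ^ 2) := by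
  rw [norm_mul, norm_of_nonneg (exp_pos _).le, ← one_mul (exp (-(2 * c / π ^ 2) * φ ^ 2))]
  gcongr
  · exact abs_cos_le_one _
  · linarith [mul_sq_le_mul_one_sub_cos_div hN hc hs hφ]

theorem tendsto_integral_cos_mul_mul_exp_neg_mul_one_sub_cos {ι : Type*} {l : Filter ι}
    [l.IsCountablyGenerated] {N s : ι → ℝ} {c : ℝ} (hc : 0 < c) (hN : Tendsto N l atTop)
    (hs : Tendsto (fun i => s i / N i ^ 2) l (𝓝 c)) (b : ℝ) :
    Tendsto (fun i => ∫ φ in 0..N i * π, cos (b * φ) * exp (-(s i * (1 - cos (φ / N i))))) l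
      (𝓝 (∫ φ in Ioi 0, cos (b * φ) * exp (-(c / 2) * φ ^ 2))) := by
  set f : ι → ℝ → ℝ := fun i φ => cos (b * φ) * exp (-(s i * (1 - cos (φ / N i))))
  have h_indicator : ∀ᶠ i in l,
      ∫ φ, (Ioc 0 (N i * π)).indicator (f i) φ = ∫ φ in 0..N i * π, f i φ := by
    filter_upwards [hN.eventually_ge_atTop 0] with i hi
    rw [intervalIntegral.integral_of_le (by positivity), integral_indicator measurableSet_Ioc]
  rw [← integral_indicator measurableSet_Ioi]
  refine Tendsto.congr' h_indicator (tendsto_integral_filter_of_dominated_convergence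
    (fun φ => exp (-(2 * (c / 2) / π ^ 2) * φ ^ 2)) (.of_forall fun i => ?_) ?_
    (integrable_exp_neg_mul_sq (by positivity)) (.of_forall fun φ => ?_))
  · exact (Continuous.aestronglyMeasurable (by fun_prop)).indicator measurableSet_Ioc
  · filter_upwards [hN.eventually_gt_atTop 0,
      hs.eventually (eventually_ge_nhds (half_lt_self hc))] with i hNi hsi
    refine .of_forall fun φ => ?_
    by_cases hφ : φ ∈ Ioc 0 (N i * π)
    · rw [indicator_of_mem hφ]
      exact norm_cos_mul_exp_neg_mul_one_sub_cos_le hNi (half_pos hc).le hsi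
        (abs_le.2 ⟨by linarith [hφ.1, mul_pos hNi pi_pos], hφ.2⟩) b
    · rw [indicator_of_notMem hφ, norm_zero]
      positivity
  · rcases le_or_gt φ 0 with hφ | hφ
    · simp [indicator_of_notMem, hφ.not_gt, tendsto_const_nhds]
    rw [indicator_of_mem (mem_Ioi.2 hφ)]
    have h_mem : ∀ᶠ i in l, (Ioc 0 (N i * π)).indicator (f i) φ = f i φ := by
      filter_upwards [(hN.atTop_mul_const pi_pos).eventually_ge_atTop φ] with i hi
      exact indicator_of_mem (mem_Ioc.2 ⟨hφ, hi⟩) _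
    refine Tendsto.congr' (EventuallyEq.symm h_mem) (tendsto_const_nhds.mul ?_)
    rw [neg_mul]
    exact (continuous_exp.tendsto _).comp (tendsto_mul_one_sub_cos_div hN hs φ).neg

theorem rescaled_besselI_tendsto_heat_kernel_general (n : ℕ → ℕ) (α : ℝ)
    (hα : 0 < α) (hlim : Tendsto (fun u : ℕ => (n u : ℝ) / (u : ℝ)) atTop (nhds α))
    (t : ℝ) (ht : 0 < t) (k : ℕ) :
    Tendsto (fun u : ℕ =>
        (n u : ℝ) * Real.exp (-(2 * (u : ℝ) ^ 2 * t)) *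
          besselI ((n u : ℤ) * (k : ℤ)) (2 * (u : ℝ) ^ 2 * t))
      atTop
      (nhds (α / Real.sqrt (4 * Real.pi * t) * Real.exp (-(α * k) ^ 2 / (4 * t)))) := by
  have hn : Tendsto (fun u => (n u : ℝ)) atTop atTop :=
    (hlim.pos_mul_atTop hα tendsto_natCast_atTop_atTop).congr' <| by
      filter_upwards [eventually_ne_atTop 0] with u hu
      exact div_mul_cancel₀ _ (Nat.cast_ne_zero.2 hu)
  have hs : Tendsto (fun u : ℕ => 2 * (u : ℝ) ^ 2 * t / (n u : ℝ) ^ 2) atTop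
      (𝓝 (2 * t / α ^ 2)) := by
    convert ((hlim.inv₀ hα.ne').pow 2).const_mul (2 * t) using 2 with u
    · rw [inv_div, div_pow]
      ring
    · field_simp
  have h_integral := (tendsto_integral_cos_mul_mul_exp_neg_mul_one_sub_cos (by positivity) hn hs k).const_mul
    π⁻¹
  rw [integral_Ioi_cos_mul_mul_exp_neg_mul_sq (by positivity)] at h_integral
  convert h_integral using 2 with u
  · rw [natCast_mul_exp_neg_mul_besselI, Int.cast_natCast]
  · have hroot : √(4 * π * t) ^ 2 = 4 * π * t := sq_sqrt (by positivity)
    rw [show π / (2 * t / α ^ 2 / 2) = (α * √(4 * π * t) / (2 * t)) ^ 2 by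
      rw [div_pow, mul_pow, hroot]; field_simp; ring, sqrt_sq (by positivity)]
    field_simp
    rw [hroot]
    ring

/-- The re-scaled Bessel functions converge to the Euclidean heat kernel:
if `n(u)/u → α > 0`, then for `t > 0` and `k ≥ 0`,
`n(u)·e^{-2u²t}·I_{n(u)k}(2u²t) → (α/√(4πt))·e^{-(αk)²/(4t)}` as `u → ∞`. -/
theorem rescaled_besselI_tendsto_heat_kernel (n : ℕ → ℕ) (hn : ∀ u, 0 < n u) (α : ℝ)
    (hα : 0 < α) (hlim : Tendsto (fun u : ℕ => (n u : ℝ) / (u : ℝ)) atTop (nhds α))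
    (t : ℝ) (ht : 0 < t) (k : ℕ) :
    Tendsto (fun u : ℕ =>
        (n u : ℝ) * Real.exp (-(2 * (u : ℝ) ^ 2 * t)) *
          besselI ((n u : ℤ) * (k : ℤ)) (2 * (u : ℝ) ^ 2 * t))
      atTop
      (nhds (α / Real.sqrt (4 * Real.pi * t) * Real.exp (-(α * k) ^ 2 / (4 * t)))) :=
  rescaled_besselI_tendsto_heat_kernel_general n α hα hlim t ht k
end

section
/- Let d ≥ 1 and let N(u) = (n_1(u),…,n_d(u)) be d-tuples of positive integers indexed by positive integers u such that n_j(u)/u → α_j for reals α_j > 0 as u → ∞. Then for every fixed real t > 0, θ_{N(u)}(u²t) → Θ_A(t) as u → ∞. -/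
open Real Filter

/-- The theta function (heat trace) of the real torus `Aℤ^d\ℝ^d`, where `A` is diagonal
with entries `α_1, …, α_d`. -/
noncomputable def realTheta (d : ℕ) (α : Fin d → ℝ) (t : ℝ) : ℝ :=
  (∏ j, α j) *
    ∑' K : Fin d → ℤ, ∏ j,
      (4 * Real.pi * t) ^ (-(1:ℝ) / 2) * Real.exp (-(α j * (K j : ℝ)) ^ 2 / (4 * t))

/-!
Both heat traces factor over the coordinates. The discrete one is a product of heat traces of
cycles, `∑_{k mod n} exp (-4 sin² (πk/n) s)`, and by Poisson summation (Jacobi's theta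
transformation) the real one is a product of `∑_{k ∈ ℤ} exp (-4 (πk/α)² t)`. Taking `k` in a
window of length `n` centred at `0` and `s = u² t`, each summand converges because
`u sin (πk/n) → πk/α`, and Jordan's inequality `sin x ≥ 2x/π` on `[0, π/2]` bounds it by the
summable Gaussian `exp (-4 (k/α)² t)` as soon as `n ≤ 2αu`; Tannery's theorem (dominated
convergence for series) concludes.
-/

open Topology Finset

theorem summable_exp_neg_mul_int_sq {c : ℝ} (hc : 0 < c) :
    Summable fun k : ℤ => exp (-c * k ^ 2) := by
  refine (summable_pow_mul_jacobiTheta₂_term_bound 0 (div_pos hc pi_pos) 0).congr fun k => ?_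
  rw [pow_zero, one_mul]
  congr 1
  field_simp
  ring

theorem mul_tsum_heatKernel_int {α t : ℝ} (hα : 0 < α) (ht : 0 < t) :
    α * ∑' k : ℤ, (4 * π * t) ^ (-(1 : ℝ) / 2) * exp (-(α * k) ^ 2 / (4 * t)) =
      ∑' k : ℤ, exp (-(4 * (π * k / α) ^ 2) * t) := by
  have ha : 0 < 4 * π * t / α ^ 2 := by positivity
  have hpoisson := Real.tsum_exp_neg_mul_int_sq ha
  have hlhs : ∀ k : ℤ, exp (-π * (4 * π * t / α ^ 2) * k ^ 2) = exp (-(4 * (π * k / α) ^ 2) * t) :=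
    fun k => by congr 1; field_simp
  have hrhs : ∀ k : ℤ, exp (-π / (4 * π * t / α ^ 2) * k ^ 2) = exp (-(α * k) ^ 2 / (4 * t)) :=
    fun k => by congr 1; field_simp
  have hconst : 1 / (4 * π * t / α ^ 2) ^ (1 / 2 : ℝ) = α * (4 * π * t) ^ (-(1 : ℝ) / 2) := by
    rw [div_rpow (by positivity) (sq_nonneg α), ← rpow_natCast α 2, ← rpow_mul hα.le,
      neg_div, rpow_neg (by positivity)]
    norm_num
    ring
  simp only [hlhs, hrhs, hconst] at hpoisson
  rw [hpoisson, tsum_mul_left]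
  ring

theorem hasSum_prod_fin_pi {κ : Type*} {d : ℕ} {f : Fin d → κ → ℝ} {a : Fin d → ℝ}
    (hf0 : ∀ j k, 0 ≤ f j k) (hf : ∀ j, HasSum (f j) (a j)) :
    HasSum (fun K : Fin d → κ => ∏ j, f j (K j)) (∏ j, a j) := by
  induction d with
  | zero => simp
  | succ d ih =>
    have hhead : HasSum (f 0) (a 0) := hf 0
    have htail : HasSum (fun K : Fin d → κ => ∏ j : Fin d, f j.succ (K j))
        (∏ j : Fin d, a j.succ) :=
      ih (fun j k => hf0 j.succ k) (fun j => hf j.succ)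
    have htail_nonneg : 0 ≤ fun K : Fin d → κ => ∏ j : Fin d, f j.succ (K j) :=
      fun K => prod_nonneg fun j _ => hf0 j.succ (K j)
    have hsplit : (fun K : Fin (d + 1) → κ => ∏ j, f j (K j)) ∘ Fin.consEquiv (fun _ => κ) =
        fun p => f 0 p.1 * ∏ j : Fin d, f j.succ (p.2 j) := by
      ext p
      simp [Fin.consEquiv, Fin.prod_univ_succ]
    have hhead_nonneg : 0 ≤ f 0 := hf0 0
    have hsum := Summable.mul_of_nonneg hhead.summable htail.summable hhead_nonneg htail_nonneg
    have hprod := hhead.mul htail hsum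
    rw [← (Fin.consEquiv fun _ => κ).hasSum_iff, hsplit, Fin.prod_univ_succ]
    exact hprod

theorem realTheta_eq_prod {d : ℕ} {α : Fin d → ℝ} (hα : ∀ j, 0 < α j) {t : ℝ} (ht : 0 < t) :
    realTheta d α t = ∏ j, ∑' k : ℤ, exp (-(4 * (π * k / α j) ^ 2) * t) := by
  have hsummable (j : Fin d) : Summable fun k : ℤ =>
      (4 * π * t) ^ (-(1 : ℝ) / 2) * exp (-(α j * k) ^ 2 / (4 * t)) :=
    ((summable_exp_neg_mul_int_sq (c := α j ^ 2 / (4 * t)) (by have := hα j; positivity)).mul_left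
      ((4 * π * t) ^ (-(1 : ℝ) / 2))).congr fun k => by congr 2; ring
  have hprod := hasSum_prod_fin_pi (fun j k => by positivity) fun j => (hsummable j).hasSum
  rw [realTheta, hprod.tsum_eq, ← prod_mul_distrib]
  exact prod_congr rfl fun j _ => mul_tsum_heatKernel_int (hα j) ht

noncomputable def cycleHeatTerm (n : ℕ) (s : ℝ) (k : ℤ) : ℝ := exp (-(4 * sin (π * k / n) ^ 2) * s)

theorem periodic_cycleHeatTerm (n : ℕ) (s : ℝ) : Function.Periodic (cycleHeatTerm n s) n := by
  intro k
  rcases eq_or_ne n 0 with rfl | hn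
  · simp
  · have : π * ((k + n : ℤ) : ℝ) / n = π * k / n + π := by push_cast; field_simp
    rw [cycleHeatTerm, cycleHeatTerm, this, sin_add_pi, neg_sq]

theorem discTheta_eq_prod (d : ℕ) (N : Fin d → ℕ) (s : ℝ) :
    discTheta d N s = ∏ j, ∑ k : Fin (N j), cycleHeatTerm (N j) s k := by
  rw [discTheta, prod_univ_sum, Fintype.piFinset_univ]
  refine sum_congr rfl fun K _ => ?_
  have hcos (x : ℝ) : 4 * sin x ^ 2 = 2 - 2 * cos (2 * x) := by rw [sin_sq_eq_half_sub]; ring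
  simp only [Lam, cycleHeatTerm, ← exp_sum, Int.cast_natCast, hcos, ← sum_mul, sum_neg_distrib,
    sum_sub_distrib, sum_const, card_univ, Fintype.card_fin, nsmul_eq_mul, mul_div_assoc, mul_assoc]
  ring_nf

-- A complete residue system mod `n` on which `|π k / n| ≤ π / 2`.
noncomputable def centeredWindow (n : ℕ) : Finset ℤ := Ico (-(n / 2 : ℕ) : ℤ) (-(n / 2 : ℕ) + n)

theorem two_mul_abs_le_of_mem_centeredWindow {n : ℕ} {k : ℤ} (hk : k ∈ centeredWindow n) :
    2 * |k| ≤ n := by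
  rw [centeredWindow, mem_Ico] at hk
  rw [abs_eq_max_neg]
  omega

theorem mem_centeredWindow_of_two_mul_abs_lt {n : ℕ} {k : ℤ} (hk : 2 * |k| < n) :
    k ∈ centeredWindow n := by
  rw [centeredWindow, mem_Ico]
  rw [abs_eq_max_neg] at hk
  omega

theorem Function.Periodic.sum_Ico_int_eq_sum_fin {M : Type*} [AddCommMonoid M] {f : ℤ → M}
    {n : ℕ} (hf : Function.Periodic f n) (a : ℤ) :
    ∑ k ∈ Ico a (a + n), f k = ∑ k : Fin n, f k := by
  have shift_succ (b : ℤ) : ∑ k ∈ range n, f (b + 1 + k) = ∑ k ∈ range n, f (b + k) := by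
    cases n with
    | zero => simp
    | succ m =>
      rw [sum_range_succ, sum_range_succ']
      congr 1
      · exact sum_congr rfl fun k _ => by push_cast; ring_nf
      · rw [Nat.cast_zero, add_zero, ← hf b]
        push_cast; ring_nf
  have shift : ∀ b : ℤ, ∑ k ∈ range n, f (b + k) = ∑ k ∈ range n, f k := by
    intro b
    induction b using Int.induction_on with
    | zero => simp
    | succ b ih => rw [shift_succ, ih]
    | pred b ih => rw [← ih, ← shift_succ, sub_add_cancel]
  rw [Int.Ico_eq_finset_map, sum_map, add_sub_cancel_left, Int.toNat_natCast,
    Fin.sum_univ_eq_sum_range (fun k : ℕ => f k)]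
  exact shift a

theorem sum_fin_cycleHeatTerm_eq_tsum (n : ℕ) (s : ℝ) :
    ∑ k : Fin n, cycleHeatTerm n s k =
      ∑' k : ℤ, (centeredWindow n : Set ℤ).indicator (cycleHeatTerm n s) k := by
  rw [← sum_eq_tsum_indicator, centeredWindow, (periodic_cycleHeatTerm n s).sum_Ico_int_eq_sum_fin]

theorem sin_eq_mul_sinc (x : ℝ) : sin x = x * sinc x := by
  rcases eq_or_ne x 0 with rfl | hx
  · simp
  · rw [sinc_of_ne_zero hx, mul_div_cancel₀ _ hx]

theorem Filter.Tendsto.mul_sin {ι : Type*} {l : Filter ι} {a b : ι → ℝ} {c : ℝ}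
    (ha : Tendsto a l (𝓝 0)) (hab : Tendsto (fun i => b i * a i) l (𝓝 c)) :
    Tendsto (fun i => b i * sin (a i)) l (𝓝 c) := by
  have hsinc : Tendsto (fun i => sinc (a i)) l (𝓝 1) := by
    rw [← sinc_zero]
    exact (continuous_sinc.tendsto 0).comp ha
  simpa [sin_eq_mul_sinc, mul_assoc] using hab.mul hsinc

section GrowthRate

variable {f : ℕ → ℝ} {α : ℝ}

theorem tendsto_atTop_of_tendsto_div_natCast (hα : 0 < α)
    (hf : Tendsto (fun u : ℕ => f u / u) atTop (𝓝 α)) : Tendsto f atTop atTop := by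
  refine (hf.pos_mul_atTop hα tendsto_natCast_atTop_atTop).congr' ?_
  filter_upwards [eventually_ne_atTop 0] with u hu
  field_simp

theorem tendsto_natCast_div_of_tendsto_div_natCast (hα : α ≠ 0)
    (hf : Tendsto (fun u : ℕ => f u / u) atTop (𝓝 α)) :
    Tendsto (fun u : ℕ => u / f u) atTop (𝓝 α⁻¹) := by
  simpa only [inv_div] using hf.inv₀ hα

end GrowthRate

theorem cycleHeatTerm_le {n : ℕ} {k : ℤ} (hk : 2 * |k| ≤ n) {α t x : ℝ} (hα : 0 < α)
    (ht : 0 ≤ t) (hn : n ≤ 2 * α * x) :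
    cycleHeatTerm n (x ^ 2 * t) k ≤ exp (-(4 * (k / α) ^ 2) * t) := by
  rcases Nat.eq_zero_or_pos n with rfl | hn0
  · obtain rfl : k = 0 := by rw [abs_eq_max_neg] at hk; omega
    simp [cycleHeatTerm]
  have hn0' : (0 : ℝ) < n := by exact_mod_cast hn0
  have hk' : 2 * |(k : ℝ)| ≤ n := by exact_mod_cast hk
  have hjordan : 2 * |(k : ℝ)| / n ≤ |sin (π * k / n)| := by
    have hx : |π * k / n| ≤ π / 2 := by
      rw [abs_div, abs_mul, abs_of_pos pi_pos, abs_of_pos hn0', div_le_div_iff₀ hn0' two_pos]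
      nlinarith [pi_pos]
    convert mul_abs_le_abs_sin hx using 1
    rw [abs_div, abs_mul, abs_of_pos pi_pos, abs_of_pos hn0']
    field_simp
  have hkx : |k / α| ≤ |x * sin (π * k / n)| := by
    have hx0 : 0 ≤ x := by nlinarith
    rw [abs_div, abs_of_pos hα, abs_mul, abs_of_nonneg hx0, div_le_iff₀ hα]
    rw [div_le_iff₀ hn0'] at hjordan
    nlinarith [abs_nonneg (sin (π * k / n))]
  have hsq : (k / α) ^ 2 * t ≤ (x * sin (π * k / n)) ^ 2 * t :=
    mul_le_mul_of_nonneg_right (sq_le_sq.mpr hkx) ht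
  rw [cycleHeatTerm, exp_le_exp]
  linarith

theorem tendsto_indicator_cycleHeatTerm {α t : ℝ} (hα : 0 < α) {n : ℕ → ℕ}
    (hn : Tendsto (fun u : ℕ => (n u : ℝ) / u) atTop (𝓝 α)) (k : ℤ) :
    Tendsto (fun u : ℕ => (centeredWindow (n u) : Set ℤ).indicator
        (cycleHeatTerm (n u) ((u : ℝ) ^ 2 * t)) k) atTop
      (𝓝 (exp (-(4 * (π * k / α) ^ 2) * t))) := by
  have hn_top := tendsto_atTop_of_tendsto_div_natCast hα hn
  have hmem : ∀ᶠ u in atTop, k ∈ centeredWindow (n u) := by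
    filter_upwards [hn_top.eventually_gt_atTop (2 * |(k : ℝ)|)] with u hu
    exact mem_centeredWindow_of_two_mul_abs_lt (by exact_mod_cast hu)
  have hsin : Tendsto (fun u : ℕ => (u : ℝ) * sin (π * k / n u)) atTop (𝓝 (π * k / α)) := by
    refine (tendsto_const_nhds.div_atTop hn_top).mul_sin ?_
    have := (tendsto_natCast_div_of_tendsto_div_natCast hα.ne' hn).const_mul (π * k)
    convert this using 2 with u
    · ring
    · rw [div_eq_mul_inv]
  have hterm := (continuous_exp.tendsto _).comp (((hsin.pow 2).const_mul 4).neg.mul_const t)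
  refine hterm.congr' ?_
  filter_upwards [hmem] with u hu
  rw [Set.indicator_of_mem (by exact_mod_cast hu), cycleHeatTerm, Function.comp_apply]
  ring_nf

theorem tendsto_sum_cycleHeatTerm {α t : ℝ} (hα : 0 < α) (ht : 0 < t) {n : ℕ → ℕ}
    (hn : Tendsto (fun u : ℕ => (n u : ℝ) / u) atTop (𝓝 α)) :
    Tendsto (fun u : ℕ => ∑ k : Fin (n u), cycleHeatTerm (n u) ((u : ℝ) ^ 2 * t) k) atTop
      (𝓝 (∑' k : ℤ, exp (-(4 * (π * k / α) ^ 2) * t))) := by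
  simp only [sum_fin_cycleHeatTerm_eq_tsum]
  have hbound : Summable fun k : ℤ => exp (-(4 * (k / α) ^ 2) * t) :=
    (summable_exp_neg_mul_int_sq (c := 4 * t / α ^ 2) (by positivity)).congr fun k => by
      congr 1; ring
  refine tendsto_tsum_of_dominated_convergence hbound (tendsto_indicator_cycleHeatTerm hα hn) ?_
  filter_upwards [hn.eventually (gt_mem_nhds (by linarith : α < 2 * α)),
    eventually_gt_atTop 0] with u hu hu0 k
  have hu0' : (0 : ℝ) < u := by exact_mod_cast hu0
  rw [div_lt_iff₀ hu0'] at hu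
  refine (Real.norm_of_nonneg (Set.indicator_nonneg (fun _ _ => (exp_pos _).le) _)).trans_le ?_
  refine Set.indicator_apply_le' (fun hk => ?_) (fun _ => (exp_pos _).le)
  exact cycleHeatTerm_le (two_mul_abs_le_of_mem_centeredWindow hk) hα ht.le hu.le

theorem discTheta_tendsto_realTheta_general (d : ℕ) (N : ℕ → Fin d → ℕ) (α : Fin d → ℝ)
    (hα : ∀ j, 0 < α j)
    (hlim : ∀ j, Tendsto (fun u : ℕ => (N u j : ℝ) / (u : ℝ)) atTop (nhds (α j)))
    (t : ℝ) (ht : 0 < t) :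
    Tendsto (fun u : ℕ => discTheta d (N u) ((u : ℝ) ^ 2 * t)) atTop
      (nhds (realTheta d α t)) := by
  simp only [discTheta_eq_prod, realTheta_eq_prod hα ht]
  exact tendsto_finsetProd _ fun j _ => tendsto_sum_cycleHeatTerm (hα j) ht (hlim j)

/-- Rescaled heat traces of degenerating discrete tori converge pointwise to the heat trace of
the limiting real torus. -/
theorem discTheta_tendsto_realTheta (d : ℕ) (hd : 1 ≤ d) (N : ℕ → Fin d → ℕ)
    (hN : ∀ u j, 0 < N u j) (α : Fin d → ℝ) (hα : ∀ j, 0 < α j)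
    (hlim : ∀ j, Tendsto (fun u : ℕ => (N u j : ℝ) / (u : ℝ)) atTop (nhds (α j)))
    (t : ℝ) (ht : 0 < t) :
    Tendsto (fun u : ℕ => discTheta d (N u) ((u : ℝ) ^ 2 * t)) atTop
      (nhds (realTheta d α t)) :=
  discTheta_tendsto_realTheta_general d N α hα hlim t ht
end

section
/- One has ∫_0^∞ e^{−2t}(I_0(2t) − 1) dt/t = log 2; equivalently, with 𝓘_1(0) = −∫_0^∞ (e^{−2t} I_0(2t) − e^{−t}) dt/t, one has 𝓘_1(0) = 0. -/
open MeasureTheory Real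

/-!
Since `e^{-2t} (I_0(2t) - 1) = (1/π) ∫_0^π (e^{-2(1 - cos θ) t} - e^{-2t}) dθ`, the integral is a
superposition of Frullani integrals `∫_0^∞ (e^{-a t} - e^{-b t}) dt/t = log b - log a`, with
`a = 2(1 - cos θ)` and `b = 2`. These have constant sign, so their absolute integrals are
`|log b - log a|`, which is integrable in `θ`; Fubini then turns the integral into
`(1/π) ∫_0^π (log 2 - log (2 - 2 cos θ)) dθ = log 2`, because `2 - 2 cos θ = 4 sin² (θ/2)` and
`∫_0^π log sin (θ/2) dθ = -π log 2`. The second claim differs from the first by the Frullani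
integral `∫_0^∞ (e^{-2t} - e^{-t}) dt/t = -log 2`.
-/

open Set

noncomputable def expFrullani (a b t : ℝ) : ℝ := (exp (-(a * t)) - exp (-(b * t))) / t

lemma expFrullani_swap (a b t : ℝ) : expFrullani b a t = -expFrullani a b t := by
  simp only [expFrullani]; ring

lemma expFrullani_nonneg {a b t : ℝ} (hab : a ≤ b) (ht : 0 ≤ t) : 0 ≤ expFrullani a b t :=
  div_nonneg (sub_nonneg.2 (exp_le_exp.2 (by nlinarith))) ht

lemma expFrullani_le {a b t : ℝ} (ht : 0 < t) :
    expFrullani a b t ≤ (b - a) * exp (-(a * t)) := by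
  have key : exp (-(a * t)) - exp (-(b * t)) ≤ (b - a) * t * exp (-(a * t)) := by
    have := add_one_le_exp (-((b - a) * t))
    have h : exp (-(b * t)) = exp (-((b - a) * t)) * exp (-(a * t)) := by
      rw [← exp_add]; ring_nf
    rw [h]
    nlinarith [exp_pos (-(a * t))]
  rw [expFrullani, div_le_iff₀ ht]
  linarith

lemma integrableOn_expFrullani_of_le {a b : ℝ} (ha : 0 < a) (hab : a ≤ b) :
    IntegrableOn (expFrullani a b) (Ioi 0) := by
  refine Integrable.mono' ((exp_neg_integrableOn_Ioi 0 ha).const_mul (b - a))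
    (Measurable.aestronglyMeasurable (by unfold expFrullani; fun_prop)) ?_
  filter_upwards [ae_restrict_mem measurableSet_Ioi] with t ht
  rw [norm_of_nonneg (expFrullani_nonneg hab (le_of_lt ht)), neg_mul]
  exact expFrullani_le ht

lemma integrableOn_expFrullani {a b : ℝ} (ha : 0 < a) (hb : 0 < b) :
    IntegrableOn (expFrullani a b) (Ioi 0) := by
  rcases le_total a b with hab | hba
  · exact integrableOn_expFrullani_of_le ha hab
  · exact (integrableOn_expFrullani_of_le hb hba).neg.congr_fun
      (fun t _ => (expFrullani_swap b a t).symm) measurableSet_Ioi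

lemma integral_expFrullani {a b : ℝ} (ha : 0 < a) (hb : 0 < b) :
    ∫ t in Ioi 0, expFrullani a b t = log b - log a := by
  have hf : Continuous fun x : ℝ => exp (-x) := by fun_prop
  have h := Frullani.integral_Ioi_eq (hf.continuousOn.locallyIntegrableOn measurableSet_Ioi)
    ha hb (by simpa using (hf.tendsto 0).mono_left nhdsWithin_le_nhds)
    tendsto_exp_neg_atTop_nhds_zero
    ((integrableOn_expFrullani ha hb).congr_fun
      (fun t _ => by simp [expFrullani, div_eq_inv_mul]) measurableSet_Ioi)
  simp only [smul_eq_mul, sub_zero, mul_one] at h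
  rw [← log_div hb.ne' ha.ne', ← h]
  simp only [expFrullani, div_eq_inv_mul]

lemma integral_abs_expFrullani {a b : ℝ} (ha : 0 < a) (hb : 0 < b) :
    ∫ t in Ioi 0, |expFrullani a b t| = |log b - log a| := by
  wlog hab : a ≤ b generalizing a b
  · simpa [expFrullani_swap b a, abs_sub_comm] using this hb ha (le_of_not_ge hab)
  rw [abs_of_nonneg (sub_nonneg.2 (log_le_log ha hab)), ← integral_expFrullani ha hb]
  exact setIntegral_congr_fun measurableSet_Ioi fun t ht =>
    abs_of_nonneg (expFrullani_nonneg hab (le_of_lt ht))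

section

variable {μ : Measure ℝ} {c : ℝ → ℝ} {b : ℝ}

lemma integrable_prod_expFrullani (hc : Measurable c) (hc_pos : ∀ᵐ θ ∂μ, 0 < c θ) (hb : 0 < b)
    (hlog : Integrable (fun θ => log b - log (c θ)) μ) :
    Integrable (Function.uncurry fun θ t => expFrullani (c θ) b t)
      (μ.prod (volume.restrict (Ioi 0))) := by
  refine (integrable_prod_iff (Measurable.aestronglyMeasurable ?_)).2 ⟨?_, ?_⟩
  · unfold expFrullani; fun_prop
  · exact hc_pos.mono fun θ hθ => integrableOn_expFrullani hθ hb
  · refine hlog.abs.congr (hc_pos.mono fun θ hθ => ?_)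
    simp only [norm_eq_abs]
    exact (integral_abs_expFrullani hθ hb).symm

lemma integral_integral_expFrullani [SFinite μ] (hc : Measurable c) (hc_pos : ∀ᵐ θ ∂μ, 0 < c θ)
    (hb : 0 < b) (hlog : Integrable (fun θ => log b - log (c θ)) μ) :
    ∫ t in Ioi 0, ∫ θ, expFrullani (c θ) b t ∂μ = ∫ θ, (log b - log (c θ)) ∂μ := by
  rw [← integral_integral_swap (integrable_prod_expFrullani hc hc_pos hb hlog)]
  exact integral_congr_ae (hc_pos.mono fun θ hθ => integral_expFrullani hθ hb)

end

lemma two_mul_one_sub_cos (θ : ℝ) : 2 * (1 - cos θ) = 2 ^ 2 * sin (θ / 2) ^ 2 := by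
  rw [show cos θ = cos (2 * (θ / 2)) by ring_nf, cos_two_mul]
  linear_combination (-4) * cos_sq_add_sin_sq (θ / 2)

lemma log_two_mul_one_sub_cos {θ : ℝ} (h : sin (θ / 2) ≠ 0) :
    log (2 * (1 - cos θ)) = 2 * log 2 + 2 * log (sin (θ / 2)) := by
  rw [two_mul_one_sub_cos, log_mul (by norm_num) (pow_ne_zero 2 h), log_pow, log_pow]
  push_cast; ring

lemma sin_half_pos_of_mem_Ioc {θ : ℝ} (hθ : θ ∈ Ioc 0 π) : 0 < sin (θ / 2) :=
  sin_pos_of_pos_of_lt_pi (by linarith [hθ.1]) (by linarith [hθ.2, pi_pos])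

lemma log_two_mul_one_sub_cos_of_mem_Ioc {θ : ℝ} (hθ : θ ∈ Ioc 0 π) :
    log (2 * (1 - cos θ)) = 2 * log 2 + 2 * log (sin (θ / 2)) :=
  log_two_mul_one_sub_cos (sin_half_pos_of_mem_Ioc hθ).ne'

lemma intervalIntegrable_log_sin_half :
    IntervalIntegrable (fun θ => log (sin (θ / 2))) volume 0 π := by
  simpa [div_eq_inv_mul] using
    (intervalIntegrable_log_sin (a := 0) (b := π / 2)).comp_mul_left (c := 2⁻¹)

lemma intervalIntegrable_log_two_mul_one_sub_cos :
    IntervalIntegrable (fun θ => log (2 * (1 - cos θ))) volume 0 π := by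
  have h := (intervalIntegrable_const (c := 2 * log 2)).add
    (intervalIntegrable_log_sin_half.const_mul 2)
  rw [intervalIntegrable_iff_integrableOn_Ioc_of_le pi_pos.le] at h ⊢
  exact h.congr_fun (fun θ hθ => (log_two_mul_one_sub_cos_of_mem_Ioc hθ).symm) measurableSet_Ioc

lemma integral_log_two_mul_one_sub_cos : ∫ θ in 0..π, log (2 * (1 - cos θ)) = 0 := by
  have hhalf : ∫ θ in 0..π, log (sin (θ / 2)) = -log 2 * π := by
    rw [intervalIntegral.integral_comp_div (fun x => log (sin x)) two_ne_zero, zero_div,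
      integral_log_sin_zero_pi_div_two, smul_eq_mul]
    ring
  rw [intervalIntegral.integral_congr_ae (g := fun θ => 2 * log 2 + 2 * log (sin (θ / 2)))
      (ae_of_all _ fun θ hθ => by
        rw [uIoc_of_le pi_pos.le] at hθ; exact log_two_mul_one_sub_cos_of_mem_Ioc hθ),
    intervalIntegral.integral_add intervalIntegrable_const
      (intervalIntegrable_log_sin_half.const_mul 2),
    intervalIntegral.integral_const, intervalIntegral.integral_const_mul, hhalf, smul_eq_mul]
  ring

lemma integral_log_two_sub_log_two_mul_one_sub_cos :
    ∫ θ in Ioc 0 π, (log 2 - log (2 * (1 - cos θ))) = π * log 2 := by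
  rw [← intervalIntegral.integral_of_le pi_pos.le, intervalIntegral.integral_sub
    intervalIntegrable_const intervalIntegrable_log_two_mul_one_sub_cos,
    integral_log_two_mul_one_sub_cos, intervalIntegral.integral_const, smul_eq_mul]
  ring

lemma integrable_log_two_sub_log_two_mul_one_sub_cos :
    Integrable (fun θ => log 2 - log (2 * (1 - cos θ))) (volume.restrict (Ioc 0 π)) :=
  (integrable_const _).sub
    ((intervalIntegrable_iff_integrableOn_Ioc_of_le pi_pos.le).1
      intervalIntegrable_log_two_mul_one_sub_cos)

lemma ae_two_mul_one_sub_cos_pos : ∀ᵐ θ ∂volume.restrict (Ioc 0 π), 0 < 2 * (1 - cos θ) := by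
  filter_upwards [ae_restrict_mem measurableSet_Ioc] with θ hθ
  rw [two_mul_one_sub_cos]
  have := sin_half_pos_of_mem_Ioc hθ
  positivity

lemma pi_mul_besselI_zero (s : ℝ) : π * besselI 0 s = ∫ θ in 0..π, exp (s * cos θ) := by
  simp [besselI, pi_ne_zero]

lemma integral_expFrullani_two_mul_one_sub_cos (t : ℝ) :
    ∫ θ in Ioc 0 π, expFrullani (2 * (1 - cos θ)) 2 t
      = π * (exp (-(2 * t)) * (besselI 0 (2 * t) - 1) / t) := by
  have hexp : ∀ θ, exp (-(2 * (1 - cos θ) * t)) = exp (-(2 * t)) * exp (2 * t * cos θ) := by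
    intro θ; rw [← exp_add]; ring_nf
  simp only [expFrullani, hexp]
  rw [integral_div, ← intervalIntegral.integral_of_le pi_pos.le,
    intervalIntegral.integral_sub ((by fun_prop : Continuous _).intervalIntegrable _ _)
      intervalIntegrable_const,
    intervalIntegral.integral_const_mul, ← pi_mul_besselI_zero, intervalIntegral.integral_const,
    smul_eq_mul]
  ring

lemma integrableOn_exp_mul_besselI_zero_sub_one :
    IntegrableOn (fun t => exp (-(2 * t)) * (besselI 0 (2 * t) - 1) / t) (Ioi 0) := by
  have h := (integrable_prod_expFrullani (by fun_prop) ae_two_mul_one_sub_cos_pos two_pos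
    integrable_log_two_sub_log_two_mul_one_sub_cos).swap.integral_prod_left
  simp only [Function.comp_apply, Prod.swap_prod_mk, Function.uncurry_apply_pair,
    integral_expFrullani_two_mul_one_sub_cos] at h
  exact (integrable_const_mul_iff (isUnit_iff_ne_zero.2 pi_ne_zero) _).1 h

lemma integral_exp_mul_besselI_zero_sub_one :
    ∫ t in Ioi 0, exp (-(2 * t)) * (besselI 0 (2 * t) - 1) / t = log 2 := by
  have h := integral_integral_expFrullani (by fun_prop) ae_two_mul_one_sub_cos_pos two_pos
    integrable_log_two_sub_log_two_mul_one_sub_cos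
  rw [integral_log_two_sub_log_two_mul_one_sub_cos] at h
  simp only [integral_expFrullani_two_mul_one_sub_cos, integral_const_mul] at h
  exact mul_left_cancel₀ pi_ne_zero h

/-- `∫_0^∞ e^{-2t}(I_0(2t) - 1) dt/t = log 2`; equivalently `𝓘_1(0) = 0`. -/
theorem integral_besselI_one_dim :
    (∫ t in Set.Ioi (0:ℝ), Real.exp (-(2 * t)) * (besselI 0 (2 * t) - 1) / t) = Real.log 2 ∧
    (-∫ t in Set.Ioi (0:ℝ),
        (Real.exp (-(2 * t)) * besselI 0 (2 * t) - Real.exp (-t)) / t) = 0 := by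
  refine ⟨integral_exp_mul_besselI_zero_sub_one, ?_⟩
  have hsplit : ∀ t, (exp (-(2 * t)) * besselI 0 (2 * t) - exp (-t)) / t
      = exp (-(2 * t)) * (besselI 0 (2 * t) - 1) / t + expFrullani 2 1 t := by
    intro t
    simp only [expFrullani, one_mul]
    ring
  simp only [hsplit]
  rw [integral_add integrableOn_exp_mul_besselI_zero_sub_one
      (integrableOn_expFrullani two_pos one_pos),
    integral_exp_mul_besselI_zero_sub_one, integral_expFrullani two_pos one_pos, log_one]
  ring
end
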